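/- arXiv:0911.3381 — 6 statements merged into one kernel-verified Lean document; each statement's English description precedes it below -/
import Mathlib

section
/- For every composition μ, the signed sum ∑_{I ∈ HI(μ)} ε(I) equals the (ordinary) cardinality of HI_spec(μ). -/
/-- A hook, encoded by its size `s ≥ 1` and its height `h ∈ {0, …, s-1}`. -/
structure Hook where
  size : ℕ
  height : ℕ
  size_pos : 0 < size
  height_lt : height < size

/-- The sign of a hook, `(-1) ^ height`. -/
def Hook.sign (h : Hook) : ℤ := (-1) ^ h.height

/-- A hook permutation of length `l`: a sequence of `l` hooks together with a
permutation of `{1, …, l}`. -/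
structure HookPerm (l : ℕ) where
  hooks : Fin l → Hook
  perm : Equiv.Perm (Fin l)

/-- The size of a hook permutation: the sum of the sizes of its hooks. -/
def HookPerm.size {l : ℕ} (H : HookPerm l) : ℕ := ∑ i, (H.hooks i).size

/-- A hook involution: the permutation is an involution and paired indices carry
equal hooks. -/
def HookPerm.IsInvolution {l : ℕ} (H : HookPerm l) : Prop :=
  H.perm * H.perm = 1 ∧ ∀ i, H.hooks (H.perm i) = H.hooks i

/-- The sign of a hook involution: the product of the signs of the hooks at the
fixed points of the permutation. -/
def HookPerm.invSign {l : ℕ} (H : HookPerm l) : ℤ :=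
  ∏ i ∈ Finset.univ.filter (fun i => H.perm i = i), (H.hooks i).sign

/-- A hook involution is special when every fixed point carries a hook of odd
size and height `0`. -/
def HookPerm.IsSpecial {l : ℕ} (H : HookPerm l) : Prop :=
  ∀ i, H.perm i = i → Odd (H.hooks i).size ∧ (H.hooks i).height = 0

/-! The heights `0, …, s - 1` of a hook of size `s` split into pairs `{0, 1}, {2, 3}, …` when
`s` is even and `{1, 2}, {3, 4}, …` when `s` is odd, leaving only height `0` unpaired, and the
two heights of a pair have opposite signs. Moving the height to its partner at the least fixed
point of the permutation whose hook is not of odd size and height `0` is therefore a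
sign-reversing involution on the hook involutions of content `μ`. Its fixed points are exactly
the special hook involutions, and each of them has sign `1`. -/

theorem Fintype.sum_eq_sum_filter_of_involutive {α β : Type*} [Fintype α] [DecidableEq α]
    [AddCommGroup β] {f : α → β} {g : α → α} (hg : Function.Involutive g)
    (hf : ∀ a, g a ≠ a → f (g a) = -f a) :
    ∑ a, f a = ∑ a with g a = a, f a := by
  rw [← Finset.sum_filter_add_sum_filter_not Finset.univ (fun a => g a = a), add_eq_left]
  refine Finset.sum_involution (fun a _ => g a) (fun a ha => ?_) (fun a ha _ => ?_)
    (fun a ha => ?_) (fun a _ => hg a)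
  · rw [hf a (Finset.mem_filter.1 ha).2, add_neg_cancel]
  · exact (Finset.mem_filter.1 ha).2
  · simpa [hg a, eq_comm] using ha

namespace Hook

theorem ext {a b : Hook} (hs : a.size = b.size) (hh : a.height = b.height) : a = b := by
  cases a; cases b; simp_all

def IsSpecial (H : Hook) : Prop := Odd H.size ∧ H.height = 0

instance : DecidablePred IsSpecial := fun H =>
  inferInstanceAs (Decidable (Odd H.size ∧ H.height = 0))

def pairedHeight (s h : ℕ) : ℕ := if h % 2 = s % 2 then h + 1 else h - 1

theorem pairedHeight_lt {s h : ℕ} (hs : h < s) : pairedHeight s h < s := by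
  unfold pairedHeight; split <;> omega

theorem pairedHeight_pairedHeight (s h : ℕ) : pairedHeight s (pairedHeight s h) = h := by
  unfold pairedHeight; split <;> split <;> omega

theorem not_odd_and_pairedHeight_eq_zero {s h : ℕ} (hh : ¬(Odd s ∧ h = 0)) :
    ¬(Odd s ∧ pairedHeight s h = 0) := by
  rw [Nat.odd_iff] at hh ⊢; unfold pairedHeight; split <;> omega

theorem pairedHeight_mod_two {s h : ℕ} (hh : ¬(Odd s ∧ h = 0)) :
    pairedHeight s h % 2 = 1 - h % 2 := by
  rw [Nat.odd_iff] at hh; unfold pairedHeight; split <;> omega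

def flip (H : Hook) : Hook :=
  if H.IsSpecial then H
  else ⟨H.size, pairedHeight H.size H.height, H.size_pos, pairedHeight_lt H.height_lt⟩

variable {H : Hook}

@[simp]
theorem size_flip : H.flip.size = H.size := by
  unfold flip; split <;> rfl

theorem flip_of_isSpecial (hH : H.IsSpecial) : H.flip = H := if_pos hH

theorem height_flip_of_not_isSpecial (hH : ¬H.IsSpecial) :
    H.flip.height = pairedHeight H.size H.height := by
  rw [flip, if_neg hH]

@[simp]
theorem isSpecial_flip : H.flip.IsSpecial ↔ H.IsSpecial := by
  by_cases hH : H.IsSpecial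
  · rw [flip_of_isSpecial hH]
  · simp only [hH, iff_false]
    rw [IsSpecial, size_flip, height_flip_of_not_isSpecial hH]
    exact not_odd_and_pairedHeight_eq_zero hH

theorem flip_flip (H : Hook) : H.flip.flip = H := by
  by_cases hH : H.IsSpecial
  · rw [flip_of_isSpecial hH, flip_of_isSpecial hH]
  · refine ext (by simp) ?_
    rw [height_flip_of_not_isSpecial (isSpecial_flip.not.2 hH), size_flip,
      height_flip_of_not_isSpecial hH, pairedHeight_pairedHeight]

theorem sign_flip (hH : ¬H.IsSpecial) : H.flip.sign = -H.sign := by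
  rw [sign, sign, neg_one_pow_eq_pow_mod_two, neg_one_pow_eq_pow_mod_two (n := H.height),
    height_flip_of_not_isSpecial hH, pairedHeight_mod_two hH]
  rcases Nat.mod_two_eq_zero_or_one H.height with h | h <;> simp [h]

theorem flip_ne (hH : ¬H.IsSpecial) : H.flip ≠ H := by
  intro h
  have := congrArg (fun H : Hook => H.height % 2) h
  simp only [height_flip_of_not_isSpecial hH, pairedHeight_mod_two hH] at this
  omega

end Hook

namespace HookPerm

variable {l : ℕ}

theorem ext {a b : HookPerm l} (hh : a.hooks = b.hooks) (hp : a.perm = b.perm) : a = b := by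
  cases a; cases b; simp_all

theorem isSpecial_iff (I : HookPerm l) :
    I.IsSpecial ↔ ∀ i, I.perm i = i → (I.hooks i).IsSpecial := Iff.rfl

theorem invSign_of_isSpecial {I : HookPerm l} (hI : I.IsSpecial) : I.invSign = 1 :=
  Finset.prod_eq_one fun i hi => by
    rw [Hook.sign, (hI i (Finset.mem_filter.1 hi).2).2, pow_zero]

theorem finite_setOf_size_eq (μ : Fin l → ℕ) :
    {I : HookPerm l | ∀ i, (I.hooks i).size = μ i}.Finite := by
  refine Set.finite_coe_iff.1 (Finite.of_injective
    (fun I => ((fun i => ⟨(I.1.hooks i).height, I.2 i ▸ (I.1.hooks i).height_lt⟩ :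
      (i : Fin l) → Fin (μ i)), I.1.perm)) fun a b hab => ?_)
  simp only [Prod.mk.injEq, funext_iff, Fin.mk.injEq] at hab
  exact Subtype.ext (ext (funext fun i => Hook.ext ((a.2 i).trans (b.2 i).symm) (hab.1 i)) hab.2)

def badFixedPoints (I : HookPerm l) : Finset (Fin l) :=
  {i | I.perm i = i ∧ ¬(I.hooks i).IsSpecial}

@[simp]
theorem mem_badFixedPoints {I : HookPerm l} {i : Fin l} :
    i ∈ I.badFixedPoints ↔ I.perm i = i ∧ ¬(I.hooks i).IsSpecial := by
  simp [badFixedPoints]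

theorem badFixedPoints_nonempty_iff {I : HookPerm l} :
    I.badFixedPoints.Nonempty ↔ ¬I.IsSpecial := by
  simp [Finset.Nonempty, badFixedPoints, isSpecial_iff]

def flipAt (I : HookPerm l) (i : Fin l) : HookPerm l :=
  ⟨Function.update I.hooks i (I.hooks i).flip, I.perm⟩

section flipAt

variable (I : HookPerm l) (i : Fin l)

@[simp]
theorem perm_flipAt : (I.flipAt i).perm = I.perm := rfl

@[simp]
theorem hooks_flipAt_self : (I.flipAt i).hooks i = (I.hooks i).flip :=
  Function.update_self ..

theorem hooks_flipAt_of_ne {j : Fin l} (hj : j ≠ i) : (I.flipAt i).hooks j = I.hooks j :=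
  Function.update_of_ne hj ..

@[simp]
theorem size_flipAt (j : Fin l) : ((I.flipAt i).hooks j).size = (I.hooks j).size := by
  rcases eq_or_ne j i with rfl | hj
  · simp
  · rw [hooks_flipAt_of_ne I i hj]

theorem flipAt_flipAt : (I.flipAt i).flipAt i = I := by
  refine ext (funext fun j => ?_) rfl
  rcases eq_or_ne j i with rfl | hj
  · simp [Hook.flip_flip]
  · rw [hooks_flipAt_of_ne _ _ hj, hooks_flipAt_of_ne _ _ hj]

theorem badFixedPoints_flipAt : (I.flipAt i).badFixedPoints = I.badFixedPoints := by
  ext j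
  rcases eq_or_ne j i with rfl | hj
  · simp
  · simp [hooks_flipAt_of_ne I i hj]

variable {I i}

theorem flipAt_ne (hi : ¬(I.hooks i).IsSpecial) : I.flipAt i ≠ I := fun h =>
  Hook.flip_ne hi (by simpa [flipAt] using congrFun (congrArg hooks h) i)

theorem isInvolution_flipAt (hI : I.IsInvolution) (hi : I.perm i = i) :
    (I.flipAt i).IsInvolution := by
  refine ⟨hI.1, fun j => ?_⟩
  have hj : I.perm j = i ↔ j = i := by
    rw [← hi, I.perm.injective.eq_iff, hi]
  by_cases hji : j = i
  · subst hji; simp [flipAt, hi]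
  · simp [flipAt, hji, hj.not.2 hji, hI.2 j]

theorem invSign_flipAt (hi : i ∈ I.badFixedPoints) :
    (I.flipAt i).invSign = -I.invSign := by
  rw [mem_badFixedPoints] at hi
  have hfix : i ∈ Finset.univ.filter (fun j => I.perm j = j) := by simpa using hi.1
  rw [invSign, invSign, perm_flipAt, ← Finset.mul_prod_erase _ _ hfix,
    ← Finset.mul_prod_erase _ _ hfix, hooks_flipAt_self, Hook.sign_flip hi.2,
    Finset.prod_congr rfl fun j hj => by rw [hooks_flipAt_of_ne I i (Finset.ne_of_mem_erase hj)],
    neg_mul]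

end flipAt

def flip (I : HookPerm l) : HookPerm l :=
  if h : I.badFixedPoints.Nonempty then I.flipAt (I.badFixedPoints.min' h) else I

theorem flip_of_nonempty {I : HookPerm l} (h : I.badFixedPoints.Nonempty) :
    I.flip = I.flipAt (I.badFixedPoints.min' h) := dif_pos h

theorem flip_of_isSpecial {I : HookPerm l} (hI : I.IsSpecial) : I.flip = I :=
  dif_neg (badFixedPoints_nonempty_iff.not_left.2 hI)

theorem flip_flip (I : HookPerm l) : I.flip.flip = I := by
  by_cases h : I.badFixedPoints.Nonempty
  · have h' : I.flip.badFixedPoints.Nonempty := by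
      rwa [flip_of_nonempty h, badFixedPoints_flipAt]
    have hmin : I.flip.badFixedPoints.min' h' = I.badFixedPoints.min' h := by
      congr 1
      rw [flip_of_nonempty h, badFixedPoints_flipAt]
    rw [flip_of_nonempty h', hmin, flip_of_nonempty h, flipAt_flipAt]
  · have hI := badFixedPoints_nonempty_iff.not_left.1 h
    rw [flip_of_isSpecial hI, flip_of_isSpecial hI]

theorem flip_eq_self_iff {I : HookPerm l} : I.flip = I ↔ I.IsSpecial := by
  refine ⟨fun h => ?_, flip_of_isSpecial⟩
  by_contra hI
  have hne := badFixedPoints_nonempty_iff.2 hI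
  exact flipAt_ne (mem_badFixedPoints.1 (Finset.min'_mem _ hne)).2
    ((flip_of_nonempty hne).symm.trans h)

theorem invSign_flip {I : HookPerm l} (h : I.flip ≠ I) : I.flip.invSign = -I.invSign := by
  have hne := badFixedPoints_nonempty_iff.2 (flip_eq_self_iff.not.1 h)
  rw [flip_of_nonempty hne, invSign_flipAt (Finset.min'_mem _ hne)]

@[simp]
theorem size_flip (I : HookPerm l) (j : Fin l) : (I.flip.hooks j).size = (I.hooks j).size := by
  unfold flip; split <;> simp

theorem isInvolution_flip {I : HookPerm l} (hI : I.IsInvolution) : I.flip.IsInvolution := by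
  by_cases hne : I.badFixedPoints.Nonempty
  · rw [flip_of_nonempty hne]
    exact isInvolution_flipAt hI (mem_badFixedPoints.1 (Finset.min'_mem _ hne)).1
  · rwa [flip_of_isSpecial (badFixedPoints_nonempty_iff.not_left.1 hne)]

end HookPerm

theorem stmt1_general (l : ℕ) (μ : Fin l → ℕ) :
    ∑ᶠ I : {I : HookPerm l // I.IsInvolution ∧ ∀ i, (I.hooks i).size = μ i},
        I.1.invSign =
      (Nat.card {I : HookPerm l // I.IsInvolution ∧
        (∀ i, (I.hooks i).size = μ i) ∧ I.IsSpecial} : ℤ) := by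
  classical
  let S := {I : HookPerm l // I.IsInvolution ∧ ∀ i, (I.hooks i).size = μ i}
  have : Finite S := ((HookPerm.finite_setOf_size_eq μ).subset fun _ hI => hI.2).to_subtype
  have : Fintype S := Fintype.ofFinite S
  let flip : S → S := fun I =>
    ⟨I.1.flip, HookPerm.isInvolution_flip I.2.1, fun i => (I.1.size_flip i).trans (I.2.2 i)⟩
  have flip_involutive : Function.Involutive flip := fun I => Subtype.ext I.1.flip_flip
  have flip_eq_self_iff (I : S) : flip I = I ↔ I.1.IsSpecial :=
    Subtype.ext_iff.trans HookPerm.flip_eq_self_iff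
  rw [finsum_eq_sum_of_fintype, Fintype.sum_eq_sum_filter_of_involutive flip_involutive
    fun I h => HookPerm.invSign_flip fun h' => h (Subtype.ext h')]
  simp_rw [flip_eq_self_iff]
  rw [Finset.sum_congr rfl fun I hI => HookPerm.invSign_of_isSpecial (Finset.mem_filter.1 hI).2,
    Finset.sum_const, nsmul_one, ← Fintype.card_subtype, ← Nat.card_eq_fintype_card,
    Nat.card_congr ((Equiv.subtypeSubtypeEquivSubtypeInter _ _).trans
      (Equiv.subtypeEquivRight fun _ => and_assoc))]

/-- For every composition `μ`, the signed sum of hook involutions of content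
`μ` equals the number of special hook involutions of content `μ`. -/
theorem stmt1 (l : ℕ) (μ : Fin l → ℕ) (hμ : ∀ i, 0 < μ i) :
    ∑ᶠ I : {I : HookPerm l // I.IsInvolution ∧ ∀ i, (I.hooks i).size = μ i},
        I.1.invSign =
      (Nat.card {I : HookPerm l // I.IsInvolution ∧
        (∀ i, (I.hooks i).size = μ i) ∧ I.IsSpecial} : ℤ) :=
  stmt1_general l μ
end

section
/- For every partition μ and every integer i ≥ 1, the number of partitions ξ ⊇ μ such that ξ/μ is a ribbon of size i equals i plus the number of partitions λ ⊆ μ such that μ/λ is a ribbon of size i. -/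
/-- Two cells of `ℕ × ℕ` are adjacent when they share a side. -/
def CellAdj (a b : ℕ × ℕ) : Prop :=
  (a.1 = b.1 ∧ (a.2 + 1 = b.2 ∨ b.2 + 1 = a.2)) ∨
  (a.2 = b.2 ∧ (a.1 + 1 = b.1 ∨ b.1 + 1 = a.1))

/-- A finite set of cells is connected if any two of its cells are joined by a
path of cells of the set, consecutive ones sharing a side. -/
def ConnectedCells (S : Finset (ℕ × ℕ)) : Prop :=
  ∀ a ∈ S, ∀ b ∈ S,
    Relation.ReflTransGen (fun x y => x ∈ S ∧ y ∈ S ∧ CellAdj x y) a b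

/-- `S` contains no 2 × 2 square of cells. -/
def NoTwoByTwo (S : Finset (ℕ × ℕ)) : Prop :=
  ¬ ∃ i j : ℕ, (i, j) ∈ S ∧ (i + 1, j) ∈ S ∧ (i, j + 1) ∈ S ∧ (i + 1, j + 1) ∈ S

/-- The cells of the skew shape `μ / ν` (`ν` first argument, `μ` second). -/
def skewCells (ν μ : YoungDiagram) : Finset (ℕ × ℕ) :=
  μ.cells \ ν.cells

/-- `μ / ν` is a ribbon: a nonempty connected skew shape with no 2 × 2 square. -/
def IsRibbon (ν μ : YoungDiagram) : Prop :=
  ν ≤ μ ∧ (skewCells ν μ).Nonempty ∧ ConnectedCells (skewCells ν μ) ∧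
    NoTwoByTwo (skewCells ν μ)

/-- The height of the skew shape `μ / ν`: the number of rows it occupies, minus one. -/
def skewHeight (ν μ : YoungDiagram) : ℕ :=
  ((skewCells ν μ).image Prod.fst).card - 1

/-- The sign of the skew shape `μ / ν`, i.e. `(-1) ^ height`. -/
def skewSign (ν μ : YoungDiagram) : ℤ :=
  (-1) ^ skewHeight ν μ

open YoungDiagram

/-- Row lengths are monotone w.r.t. diagram inclusion. -/
lemma rowLen_mono {ν lam : YoungDiagram} (h : ν ≤ lam) (t : ℕ) :
    ν.rowLen t ≤ lam.rowLen t := by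
  have key : ∀ j, j < ν.rowLen t → j < lam.rowLen t := fun j hj =>
    mem_iff_lt_rowLen.mp (YoungDiagram.cells_subset_iff.mpr h
      (mem_iff_lt_rowLen.mpr hj))
  by_contra h'
  push_neg at h'
  rcases Nat.eq_zero_or_pos (ν.rowLen t) with h0 | h0
  · omega
  · have := key (ν.rowLen t - 1) (by omega); omega

lemma yd_ext {μ ν : YoungDiagram} (h : ∀ t, μ.rowLen t = ν.rowLen t) : μ = ν := by
  ext ⟨t, j⟩
  rw [YoungDiagram.mem_cells, YoungDiagram.mem_cells, mem_iff_lt_rowLen,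
    mem_iff_lt_rowLen, h]

lemma le_of_rowLen_le {μ ν : YoungDiagram} (h : ∀ t, μ.rowLen t ≤ ν.rowLen t) : μ ≤ ν := by
  rw [← YoungDiagram.cells_subset_iff]
  intro ⟨t, j⟩ hc
  rw [YoungDiagram.mem_cells, mem_iff_lt_rowLen] at hc ⊢
  exact lt_of_lt_of_le hc (h t)

/-- Young diagram from an antitone, eventually-zero row-length function. -/
def ydOfFn (f : ℕ → ℕ) (hf : ∀ m n : ℕ, m ≤ n → f n ≤ f m) (A : ℕ)
    (hA : ∀ t, A ≤ t → f t = 0) : YoungDiagram where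
  cells := (Finset.range A ×ˢ Finset.range (f 0)).filter (fun c => c.2 < f c.1)
  isLowerSet := by
    rintro ⟨a1, a2⟩ ⟨b1, b2⟩ ⟨h1, h2⟩ hb
    simp only [Finset.coe_filter, Finset.mem_coe, Finset.mem_product,
      Finset.mem_range, Set.mem_setOf_eq] at hb ⊢
    obtain ⟨⟨hb1, hb2⟩, hb3⟩ := hb
    simp only at h1 h2 ⊢
    have h4 : f a1 ≤ f b1 := hf _ _ h1
    have h5 : b2 < f b1 := by omega
    refine ⟨⟨?_, ?_⟩, h5⟩
    · by_contra hc
      push_neg at hc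
      have := hA b1 hc
      omega
    · have := hf 0 b1 (Nat.zero_le _)
      omega

lemma mem_ydOfFn (f : ℕ → ℕ) (hf : ∀ m n : ℕ, m ≤ n → f n ≤ f m) (A : ℕ)
    (hA : ∀ t, A ≤ t → f t = 0) (t j : ℕ) :
    (t, j) ∈ ydOfFn f hf A hA ↔ j < f t := by
  show (t, j) ∈ YoungDiagram.cells _ ↔ _
  simp only [ydOfFn, Finset.mem_filter, Finset.mem_product, Finset.mem_range]
  constructor
  · rintro ⟨_, h⟩; exact h
  · intro h
    refine ⟨⟨?_, ?_⟩, h⟩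
    · by_contra hc; push_neg at hc; have := hA t hc; omega
    · have := hf 0 t (Nat.zero_le _); omega

lemma rowLen_ydOfFn (f : ℕ → ℕ) (hf : ∀ m n : ℕ, m ≤ n → f n ≤ f m) (A : ℕ)
    (hA : ∀ t, A ≤ t → f t = 0) (t : ℕ) :
    (ydOfFn f hf A hA).rowLen t = f t := by
  have key : ∀ j, j < (ydOfFn f hf A hA).rowLen t ↔ j < f t := fun j =>
    (mem_iff_lt_rowLen).symm.trans (mem_ydOfFn f hf A hA t j)
  have h1 := key (f t)
  have h2 := key ((ydOfFn f hf A hA).rowLen t)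
  omega

/-- Abbreviation for the step relation used by `ConnectedCells`. -/
def StepRel (S : Finset (ℕ × ℕ)) (x y : ℕ × ℕ) : Prop :=
  x ∈ S ∧ y ∈ S ∧ CellAdj x y

lemma cellAdj_symm {a b : ℕ × ℕ} (h : CellAdj a b) : CellAdj b a := by
  unfold CellAdj at *; tauto

lemma stepRel_symm {S : Finset (ℕ × ℕ)} {a b : ℕ × ℕ} (h : StepRel S a b) :
    StepRel S b a := ⟨h.2.1, h.1, cellAdj_symm h.2.2⟩

lemma path_symm {S : Finset (ℕ × ℕ)} {a b : ℕ × ℕ}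
    (h : Relation.ReflTransGen (StepRel S) a b) :
    Relation.ReflTransGen (StepRel S) b a := by
  induction h with
  | refl => exact Relation.ReflTransGen.refl
  | tail _ hstep ih => exact Relation.ReflTransGen.head (stepRel_symm hstep) ih

lemma mem_skewCells {ν lam : YoungDiagram} {t j : ℕ} :
    (t, j) ∈ skewCells ν lam ↔ ν.rowLen t ≤ j ∧ j < lam.rowLen t := by
  unfold skewCells
  rw [Finset.mem_sdiff, YoungDiagram.mem_cells, YoungDiagram.mem_cells,
    YoungDiagram.mem_iff_lt_rowLen, YoungDiagram.mem_iff_lt_rowLen]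
  omega

/-- Row description of a ribbon `lam / ν` occupying rows `r` to `s`. -/
def RibbonRows (ν lam : YoungDiagram) (r s : ℕ) : Prop :=
  r ≤ s ∧ (∀ t, ν.rowLen t < lam.rowLen t ↔ r ≤ t ∧ t ≤ s) ∧
    ∀ t, r ≤ t → t < s → lam.rowLen (t + 1) = ν.rowLen t + 1

lemma path_row {ν lam : YoungDiagram} {t j1 j2 : ℕ}
    (h1 : (t, j1) ∈ skewCells ν lam) (h2 : (t, j2) ∈ skewCells ν lam) :
    Relation.ReflTransGen (StepRel (skewCells ν lam)) (t, j1) (t, j2) := by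
  have main : ∀ j1 j2 : ℕ, j1 ≤ j2 → (t, j1) ∈ skewCells ν lam →
      (t, j2) ∈ skewCells ν lam →
      Relation.ReflTransGen (StepRel (skewCells ν lam)) (t, j1) (t, j2) := by
    intro j1 j2 hle h1 h2
    obtain ⟨d, rfl⟩ := Nat.exists_eq_add_of_le hle
    clear hle
    induction d with
    | zero => exact Relation.ReflTransGen.refl
    | succ d ih =>
      rw [mem_skewCells] at h1 h2
      have hmid : (t, j1 + d) ∈ skewCells ν lam := mem_skewCells.mpr (by omega)
      have hmid' : (t, j1 + (d+1)) ∈ skewCells ν lam := mem_skewCells.mpr (by omega)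
      refine Relation.ReflTransGen.tail (ih (mem_skewCells.mpr (by omega))) ?_
      refine ⟨hmid, hmid', Or.inl ⟨rfl, Or.inl (by omega)⟩⟩
  rcases le_total j1 j2 with h | h
  · exact main _ _ h h1 h2
  · exact path_symm (main _ _ h h2 h1)

lemma rows_between {S : Finset (ℕ × ℕ)} {a b : ℕ × ℕ}
    (h : Relation.ReflTransGen (StepRel S) a b) (hb : b ∈ S) :
    ∀ t, (a.1 ≤ t ∧ t ≤ b.1) ∨ (b.1 ≤ t ∧ t ≤ a.1) → ∃ j, (t, j) ∈ S := by
  induction h using Relation.ReflTransGen.head_induction_on with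
  | refl =>
    intro t ht
    have : t = b.1 := by omega
    subst this
    exact ⟨b.2, hb⟩
  | head hstep _ ih =>
    rename_i x c _
    obtain ⟨hxS, hcS, hadj⟩ := hstep
    intro t ht
    have hrow : c.1 = x.1 ∨ c.1 = x.1 + 1 ∨ x.1 = c.1 + 1 := by
      rcases hadj with ⟨h1, _⟩ | ⟨_, h1 | h1⟩ <;> omega
    by_cases hc : (c.1 ≤ t ∧ t ≤ b.1) ∨ (b.1 ≤ t ∧ t ≤ c.1)
    · exact ih t hc
    · have : t = x.1 := by omega
      subst this
      exact ⟨x.2, hxS⟩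

lemma vert_pair {S : Finset (ℕ × ℕ)} {a b : ℕ × ℕ}
    (h : Relation.ReflTransGen (StepRel S) a b) :
    ∀ t, a.1 ≤ t → t + 1 ≤ b.1 → ∃ j, (t, j) ∈ S ∧ (t + 1, j) ∈ S := by
  induction h using Relation.ReflTransGen.head_induction_on with
  | refl => intro t h1 h2; omega
  | head hstep _ ih =>
    rename_i x c _
    obtain ⟨hxS, hcS, hadj⟩ := hstep
    intro t h1 h2
    by_cases hc : c.1 ≤ t
    · exact ih t hc h2
    · push_neg at hc
      have hvert : x.2 = c.2 ∧ c.1 = x.1 + 1 := by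
        rcases hadj with ⟨h3, _⟩ | ⟨h3, h4 | h4⟩ <;> omega
      have hxt : x.1 = t := by omega
      have hct : c.1 = t + 1 := by omega
      refine ⟨x.2, ?_, ?_⟩
      · rw [show (t, x.2) = x from by rw [← hxt]]
        exact hxS
      · rw [show (t + 1, x.2) = c from by rw [← hct, hvert.1]]
        exact hcS

lemma ribbonRows_isRibbon {ν lam : YoungDiagram} {r s : ℕ} (hle : ν ≤ lam)
    (hrr : RibbonRows ν lam r s) : IsRibbon ν lam := by
  obtain ⟨hrs, hocc, hmid⟩ := hrr
  have hrowmem : ∀ t, r ≤ t → t ≤ s → (t, ν.rowLen t) ∈ skewCells ν lam :=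
    fun t h1 h2 => mem_skewCells.mpr ⟨le_refl _, (hocc t).mpr ⟨h1, h2⟩⟩
  refine ⟨hle, ⟨(r, ν.rowLen r), hrowmem r le_rfl hrs⟩, ?_, ?_⟩
  · -- connectivity
    have anchor : ∀ t, r ≤ t → t ≤ s →
        Relation.ReflTransGen (StepRel (skewCells ν lam)) (t, ν.rowLen t) (r, ν.rowLen r) := by
      intro t ht
      refine Nat.le_induction ?_ ?_ t ht
      · intro _; exact Relation.ReflTransGen.refl
      · intro n hn ih hns
        have hmem1 : (n + 1, ν.rowLen (n + 1)) ∈ skewCells ν lam :=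
          hrowmem _ (by omega) hns
        have hmidlen := hmid n hn (by omega)
        have hmem2 : (n + 1, ν.rowLen n) ∈ skewCells ν lam := by
          rw [mem_skewCells]
          have := ν.rowLen_anti n (n + 1) (by omega)
          omega
        have hmem3 : (n, ν.rowLen n) ∈ skewCells ν lam := hrowmem _ hn (by omega)
        have p1 := path_row hmem1 hmem2
        have p2 : Relation.ReflTransGen (StepRel (skewCells ν lam))
            (n + 1, ν.rowLen n) (n, ν.rowLen n) :=
          Relation.ReflTransGen.single ⟨hmem2, hmem3, Or.inr ⟨rfl, Or.inr rfl⟩⟩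
        exact (p1.trans p2).trans (ih (by omega))
    intro a haS b hbS
    obtain ⟨t1, j1⟩ := a
    obtain ⟨t2, j2⟩ := b
    have h1 := mem_skewCells.mp haS
    have h2 := mem_skewCells.mp hbS
    have ht1 : r ≤ t1 ∧ t1 ≤ s := (hocc t1).mp (by omega)
    have ht2 : r ≤ t2 ∧ t2 ≤ s := (hocc t2).mp (by omega)
    have pa := (path_row haS (hrowmem t1 ht1.1 ht1.2)).trans (anchor t1 ht1.1 ht1.2)
    have pb := (path_row hbS (hrowmem t2 ht2.1 ht2.2)).trans (anchor t2 ht2.1 ht2.2)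
    exact pa.trans (path_symm pb)
  · -- no 2x2
    rintro ⟨t, j, h1, h2, h3, h4⟩
    rw [mem_skewCells] at h1 h2 h3 h4
    have ht : r ≤ t ∧ t ≤ s := (hocc t).mp (by omega)
    have ht1 : r ≤ t + 1 ∧ t + 1 ≤ s := (hocc (t + 1)).mp (by omega)
    have := hmid t ht.1 (by omega)
    omega

lemma isRibbon_ribbonRows {ν lam : YoungDiagram} (h : IsRibbon ν lam) :
    ∃ r s, RibbonRows ν lam r s := by
  classical
  obtain ⟨hle, ⟨c0, hc0⟩, hconn, h2x2⟩ := h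
  obtain ⟨t0, j0⟩ := c0
  rw [mem_skewCells] at hc0
  have hocc0 : ν.rowLen t0 < lam.rowLen t0 := by omega
  have hbound : ∀ t, ν.rowLen t < lam.rowLen t → t < lam.colLen 0 := by
    intro t h
    rw [← YoungDiagram.mem_iff_lt_colLen, YoungDiagram.mem_iff_lt_rowLen]
    omega
  have hex : ∃ t, ν.rowLen t < lam.rowLen t := ⟨t0, hocc0⟩
  set r := Nat.find hex with hrdef
  set s := Nat.findGreatest (fun t => ν.rowLen t < lam.rowLen t) (lam.colLen 0) with hsdef
  have hr : ν.rowLen r < lam.rowLen r := Nat.find_spec hex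
  have hs : ν.rowLen s < lam.rowLen s :=
    Nat.findGreatest_spec (P := fun t => ν.rowLen t < lam.rowLen t)
      (le_of_lt (hbound t0 hocc0)) hocc0
  have hsmax : ∀ t, s < t → ¬ ν.rowLen t < lam.rowLen t := by
    intro t hst hPt
    exact Nat.findGreatest_is_greatest (P := fun t => ν.rowLen t < lam.rowLen t)
      hst (le_of_lt (hbound t hPt)) hPt
  have hrs : r ≤ s := Nat.find_min' hex hs
  have hmidocc : ∀ t, r ≤ t → t ≤ s → ν.rowLen t < lam.rowLen t := by
    intro t h1 h2
    have hcr : (r, ν.rowLen r) ∈ skewCells ν lam := mem_skewCells.mpr ⟨le_rfl, hr⟩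
    have hcs : (s, ν.rowLen s) ∈ skewCells ν lam := mem_skewCells.mpr ⟨le_rfl, hs⟩
    obtain ⟨j, hj⟩ := rows_between (hconn _ hcr _ hcs) hcs t (Or.inl ⟨h1, h2⟩)
    rw [mem_skewCells] at hj
    omega
  have hstep : ∀ t, r ≤ t → t < s → lam.rowLen (t + 1) = ν.rowLen t + 1 := by
    intro t h1 h2
    have hcr : (t, ν.rowLen t) ∈ skewCells ν lam :=
      mem_skewCells.mpr ⟨le_rfl, hmidocc t h1 (by omega)⟩
    have hcs : (t + 1, ν.rowLen (t + 1)) ∈ skewCells ν lam :=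
      mem_skewCells.mpr ⟨le_rfl, hmidocc (t + 1) (by omega) (by omega)⟩
    obtain ⟨j, hj1, hj2⟩ := vert_pair (hconn _ hcr _ hcs) t le_rfl le_rfl
    rw [mem_skewCells] at hj1 hj2
    have hanti : lam.rowLen (t + 1) ≤ lam.rowLen t := lam.rowLen_anti t (t + 1) (by omega)
    have hanti2 : ν.rowLen (t + 1) ≤ ν.rowLen t := ν.rowLen_anti t (t + 1) (by omega)
    by_contra hne
    exact h2x2 ⟨t, ν.rowLen t, mem_skewCells.mpr (by omega), mem_skewCells.mpr (by omega),
      mem_skewCells.mpr (by omega), mem_skewCells.mpr (by omega)⟩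
  refine ⟨r, s, hrs, fun t => ⟨fun h => ⟨Nat.find_min' _ h, ?_⟩,
    fun ht => hmidocc t ht.1 ht.2⟩, hstep⟩
  by_contra hc
  exact hsmax t (by omega) h

lemma ribbonRows_unique {ν lam : YoungDiagram} {r s r' s' : ℕ}
    (hrr : RibbonRows ν lam r s) (hrr' : RibbonRows ν lam r' s') : r = r' ∧ s = s' := by
  have h1 := (hrr'.2.1 r).mp ((hrr.2.1 r).mpr ⟨le_rfl, hrr.1⟩)
  have h2 := (hrr.2.1 r').mp ((hrr'.2.1 r').mpr ⟨le_rfl, hrr'.1⟩)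
  have h3 := (hrr'.2.1 s).mp ((hrr.2.1 s).mpr ⟨hrr.1, le_rfl⟩)
  have h4 := (hrr.2.1 s').mp ((hrr'.2.1 s').mpr ⟨hrr'.1, le_rfl⟩)
  omega

lemma sum_tele (f g : ℕ → ℤ) (r : ℕ) : ∀ s, r ≤ s →
    (∀ t, r ≤ t → t < s → f (t + 1) = g t + 1) →
    ∑ t ∈ Finset.Icc r s, (f t - g t) = f r - g s + s - r := by
  refine fun s hs => Nat.le_induction ?_ ?_ s hs
  · intro _
    rw [Finset.Icc_self, Finset.sum_singleton]
    ring
  · intro n hn ih hmid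
    rw [Finset.sum_Icc_succ_top (by omega), ih (fun t h1 h2 => hmid t h1 (by omega)),
      hmid n hn (by omega)]
    push_cast
    ring

lemma skewCells_eq_biUnion {ν lam : YoungDiagram} {r s : ℕ} (hrr : RibbonRows ν lam r s) :
    skewCells ν lam = (Finset.Icc r s).biUnion
      (fun t => {t} ×ˢ Finset.Ico (ν.rowLen t) (lam.rowLen t)) := by
  ext ⟨t, j⟩
  rw [mem_skewCells]
  simp only [Finset.mem_biUnion, Finset.mem_Icc, Finset.mem_product, Finset.mem_singleton,
    Finset.mem_Ico]
  constructor
  · intro ⟨h1, h2⟩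
    exact ⟨t, (hrr.2.1 t).mp (by omega), rfl, h1, h2⟩
  · rintro ⟨a, _, rfl, h2, h3⟩
    exact ⟨h2, h3⟩

lemma ribbon_card {ν lam : YoungDiagram} {r s : ℕ} (hle : ν ≤ lam)
    (hrr : RibbonRows ν lam r s) :
    ((skewCells ν lam).card : ℤ) = (lam.rowLen r : ℤ) - ν.rowLen s + s - r := by
  have hdisj : ∀ x ∈ Finset.Icc r s, ∀ y ∈ Finset.Icc r s, x ≠ y →
      Disjoint ({x} ×ˢ Finset.Ico (ν.rowLen x) (lam.rowLen x))
        ({y} ×ˢ Finset.Ico (ν.rowLen y) (lam.rowLen y)) := by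
    intro x _ y _ hxy
    rw [Finset.disjoint_left]
    rintro ⟨a, b⟩ h1 h2
    simp only [Finset.mem_product, Finset.mem_singleton] at h1 h2
    exact hxy (h1.1 ▸ h2.1 ▸ rfl)
  have hcard : (skewCells ν lam).card =
      ∑ t ∈ Finset.Icc r s, (lam.rowLen t - ν.rowLen t) := by
    rw [skewCells_eq_biUnion hrr, Finset.card_biUnion hdisj]
    refine Finset.sum_congr rfl fun t _ => ?_
    rw [Finset.card_product, Finset.card_singleton, Nat.card_Ico, one_mul]
  rw [hcard, Nat.cast_sum]
  rw [Finset.sum_congr rfl (fun t _ => Nat.cast_sub (rowLen_mono hle t))]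
  exact sum_tele _ _ r s hrr.1 (fun t h1 h2 => by
    have := hrr.2.2 t h1 h2
    push_cast [this]
    ring)

/-- Beta numbers of a Young diagram. -/
def bet (μ : YoungDiagram) (t : ℕ) : ℤ := (μ.rowLen t : ℤ) - t

/-- `b` is a beta number of `μ`. -/
def MemB (μ : YoungDiagram) (b : ℤ) : Prop := ∃ t, bet μ t = b

lemma bet_anti {μ : YoungDiagram} {t1 t2 : ℕ} (h : t1 ≤ t2) : bet μ t2 ≤ bet μ t1 := by
  have := μ.rowLen_anti t1 t2 h
  unfold bet
  omega

lemma bet_strictAnti {μ : YoungDiagram} {t1 t2 : ℕ} (h : t1 < t2) :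
    bet μ t2 < bet μ t1 := by
  have := μ.rowLen_anti t1 t2 (le_of_lt h)
  unfold bet
  omega

lemma bet_inj {μ : YoungDiagram} {t1 t2 : ℕ} (h : bet μ t1 = bet μ t2) : t1 = t2 := by
  rcases lt_trichotomy t1 t2 with h' | h' | h'
  · have := bet_strictAnti (μ := μ) h'; omega
  · exact h'
  · have := bet_strictAnti (μ := μ) h'; omega

lemma rowLen_eq_zero_iff {μ : YoungDiagram} {t : ℕ} :
    μ.rowLen t = 0 ↔ μ.colLen 0 ≤ t := by
  have h1 : (t, 0) ∈ μ ↔ t < μ.colLen 0 := YoungDiagram.mem_iff_lt_colLen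
  have h2 : (t, 0) ∈ μ ↔ 0 < μ.rowLen t := YoungDiagram.mem_iff_lt_rowLen
  have h3 : t < μ.colLen 0 ↔ 0 < μ.rowLen t := h1.symm.trans h2
  omega

lemma memB_of_le {μ : YoungDiagram} {b : ℤ} (h : b ≤ -(μ.colLen 0 : ℤ)) : MemB μ b := by
  refine ⟨(-b).toNat, ?_⟩
  have h0 : (0:ℤ) ≤ -b := by
    have : (0:ℤ) ≤ (μ.colLen 0 : ℤ) := Int.ofNat_nonneg _
    omega
  have h1 : ((-b).toNat : ℤ) = -b := Int.toNat_of_nonneg h0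
  have h2 : μ.rowLen (-b).toNat = 0 := rowLen_eq_zero_iff.mpr (by omega)
  unfold bet
  omega

lemma notMemB_of_gt {μ : YoungDiagram} {b : ℤ} (h : (μ.rowLen 0 : ℤ) < b) : ¬ MemB μ b := by
  rintro ⟨t, ht⟩
  have := bet_anti (μ := μ) (Nat.zero_le t)
  unfold bet at this ht
  omega

lemma unocc_eq {ν lam : YoungDiagram} {r s : ℕ} (hle : ν ≤ lam)
    (hrr : RibbonRows ν lam r s) {t : ℕ} (ht : ¬ (r ≤ t ∧ t ≤ s)) :
    lam.rowLen t = ν.rowLen t := by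
  have h1 := rowLen_mono hle t
  have h2 := (hrr.2.1 t)
  omega

lemma add_facts {μ ξ : YoungDiagram} {r s : ℕ} {i : ℕ}
    (h : IsRibbon μ ξ) (hrr : RibbonRows μ ξ r s) (hcard : (skewCells μ ξ).card = i) :
    bet ξ r = bet μ s + i ∧ bet μ r < bet μ s + i ∧
      (∀ t, t < r → bet μ s + i < bet μ t) ∧ ¬ MemB μ (bet μ s + i) := by
  have hle := h.1
  have hc := ribbon_card hle hrr
  rw [hcard] at hc
  have h1 : bet ξ r = bet μ s + i := by unfold bet; omega
  have hoccr : μ.rowLen r < ξ.rowLen r := (hrr.2.1 r).mpr ⟨le_rfl, hrr.1⟩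
  have h2 : bet μ r < bet μ s + i := by
    rw [← h1]; unfold bet; omega
  have h3 : ∀ t, t < r → bet μ s + i < bet μ t := by
    intro t ht
    have hr1 : 1 ≤ r := by omega
    have hun : ξ.rowLen (r - 1) = μ.rowLen (r - 1) := unocc_eq hle hrr (by omega)
    have hanti : ξ.rowLen r ≤ ξ.rowLen (r - 1) := ξ.rowLen_anti _ _ (by omega)
    have hb : bet μ s + i < bet μ (r - 1) := by
      rw [← h1]; unfold bet; omega
    have := bet_anti (μ := μ) (show t ≤ r - 1 by omega)
    omega
  refine ⟨h1, h2, h3, ?_⟩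
  rintro ⟨t, ht⟩
  rcases lt_or_ge t r with h' | h'
  · have := h3 t h'; omega
  · have := bet_anti (μ := μ) h'; omega

lemma rem_facts {lam μ : YoungDiagram} {r s : ℕ} {i : ℕ}
    (h : IsRibbon lam μ) (hrr : RibbonRows lam μ r s) (hcard : (skewCells lam μ).card = i) :
    bet μ r = bet lam s + i ∧ bet μ (s + 1) < bet lam s ∧ bet lam s < bet μ s ∧
      ¬ MemB μ (bet lam s) := by
  have hle := h.1
  have hc := ribbon_card hle hrr
  rw [hcard] at hc
  have h1 : bet μ r = bet lam s + i := by unfold bet; omega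
  have hoccs : lam.rowLen s < μ.rowLen s := (hrr.2.1 s).mpr ⟨hrr.1, le_rfl⟩
  have h3 : bet lam s < bet μ s := by unfold bet; omega
  have h2 : bet μ (s + 1) < bet lam s := by
    have hun : μ.rowLen (s + 1) = lam.rowLen (s + 1) := unocc_eq hle hrr (by omega)
    have hanti : lam.rowLen (s + 1) ≤ lam.rowLen s := lam.rowLen_anti _ _ (by omega)
    unfold bet
    omega
  refine ⟨h1, h2, h3, ?_⟩
  rintro ⟨t, ht⟩
  rcases le_or_gt t s with h' | h'
  · have := bet_anti (μ := μ) h'; omega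
  · have := bet_anti (μ := μ) (show s + 1 ≤ t by omega); omega

lemma natCard_eq_of_rel {α β : Type*} {P : α → Prop} {Q : β → Prop} (R : α → β → Prop)
    (h1 : ∀ a, P a → ∃ b, Q b ∧ R a b)
    (h2 : ∀ b, Q b → ∃ a, P a ∧ R a b)
    (hinj : ∀ a a' b, P a → P a' → R a b → R a' b → a = a')
    (hfun : ∀ a b b', R a b → R a b' → b = b') :
    Nat.card {a // P a} = Nat.card {b // Q b} := by
  refine Nat.card_congr (Equiv.ofBijective
    (fun x => ⟨Classical.choose (h1 x.1 x.2), (Classical.choose_spec (h1 x.1 x.2)).1⟩)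
    ⟨?_, ?_⟩)
  · rintro ⟨a, ha⟩ ⟨a', ha'⟩ hh
    simp only [Subtype.mk.injEq] at hh ⊢
    exact hinj a a' _ ha ha' (Classical.choose_spec (h1 a ha)).2
      (hh ▸ (Classical.choose_spec (h1 a' ha')).2)
  · rintro ⟨b, hb⟩
    obtain ⟨a, hPa, hR⟩ := h2 b hb
    refine ⟨⟨a, hPa⟩, ?_⟩
    simp only [Subtype.mk.injEq]
    exact hfun a _ b (Classical.choose_spec (h1 a hPa)).2 hR

lemma add_construct {μ : YoungDiagram} {b : ℤ} {i : ℕ} (hi : 1 ≤ i)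
    (hb : MemB μ b) (hnb : ¬ MemB μ (b + i)) :
    ∃ ξ r s, IsRibbon μ ξ ∧ (skewCells μ ξ).card = i ∧
      RibbonRows μ ξ r s ∧ bet μ s = b := by
  classical
  obtain ⟨s, hsb⟩ := hb
  have hex : ∃ t, bet μ t < b + i := ⟨s, by omega⟩
  set r := Nat.find hex with hrdef
  have hr : bet μ r < b + i := Nat.find_spec hex
  have hrmin : ∀ t, t < r → b + i < bet μ t := by
    intro t ht
    have h1 : ¬ bet μ t < b + i := Nat.find_min hex ht
    have h2 : bet μ t ≠ b + i := fun hh => hnb ⟨t, hh⟩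
    omega
  have hrs : r ≤ s := Nat.find_min' hex (by omega)
  have hxr_nonneg : 0 ≤ b + i + r := by
    have h0 : (0:ℤ) ≤ (μ.rowLen r : ℤ) := Int.ofNat_nonneg _
    unfold bet at hr
    omega
  set xr := (b + i + r).toNat with hxrdef
  have hxr : (xr : ℤ) = b + i + r := Int.toNat_of_nonneg hxr_nonneg
  have hxr_gt : μ.rowLen r < xr := by unfold bet at hr; omega
  have hxr_le : 1 ≤ r → xr ≤ μ.rowLen (r - 1) := by
    intro h1
    have := hrmin (r - 1) (by omega)
    unfold bet at this
    omega
  set f : ℕ → ℕ := fun t =>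
    if t < r then μ.rowLen t else if t = r then xr
    else if t ≤ s then μ.rowLen (t - 1) + 1 else μ.rowLen t with hfdef
  have hflt : ∀ t, t < r → f t = μ.rowLen t := by
    intro t ht; simp only [hfdef]; rw [if_pos ht]
  have hfr : f r = xr := by simp [hfdef]
  have hfmid : ∀ t, r < t → t ≤ s → f t = μ.rowLen (t - 1) + 1 := by
    intro t h1 h2; simp only [hfdef]; rw [if_neg (by omega), if_neg (by omega), if_pos h2]
  have hfgt : ∀ t, s < t → f t = μ.rowLen t := by
    intro t ht; simp only [hfdef]; rw [if_neg (by omega), if_neg (by omega), if_neg (by omega)]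
  have hbet := hr
  unfold bet at hbet
  have hfstep : ∀ t, f (t + 1) ≤ f t := by
    intro t
    rcases lt_trichotomy (t + 1) r with h1 | h1 | h1
    · have e1 := hflt _ h1
      have e2 := hflt t (by omega)
      have e3 := μ.rowLen_anti t (t + 1) (by omega)
      omega
    · have e1 : f (t + 1) = xr := by rw [h1, hfr]
      have e2 := hflt t (by omega)
      have e3 := hxr_le (by omega)
      have e4 : μ.rowLen (r - 1) = μ.rowLen t := by rw [show r - 1 = t by omega]
      omega
    · by_cases h2 : t + 1 ≤ s
      · have e1 : f (t + 1) = μ.rowLen t + 1 := by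
          rw [hfmid _ (by omega) h2, Nat.add_sub_cancel]
        rcases eq_or_lt_of_le (show r ≤ t by omega) with h3 | h3
        · have e2 : f t = xr := by rw [← h3, hfr]
          have e4 : μ.rowLen t = μ.rowLen r := by rw [← h3]
          omega
        · have e2 := hfmid t h3 (by omega)
          have e3 := μ.rowLen_anti (t - 1) t (by omega)
          omega
      · have e1 := hfgt (t + 1) (by omega)
        by_cases h4 : t ≤ s
        · rcases eq_or_lt_of_le (show r ≤ t by omega) with h3 | h3
          · have e2 : f t = xr := by rw [← h3, hfr]
            have e3 := μ.rowLen_anti r (t + 1) (by omega)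
            omega
          · have e2 := hfmid t h3 h4
            have e3 := μ.rowLen_anti (t - 1) (t + 1) (by omega)
            omega
        · have e2 := hfgt t (by omega)
          have e3 := μ.rowLen_anti t (t + 1) (by omega)
          omega
  have hf : ∀ m n : ℕ, m ≤ n → f n ≤ f m := by
    intro m n h
    induction n with
    | zero =>
      have hm : m = 0 := Nat.le_zero.mp h
      rw [hm]
    | succ n ih =>
      rcases Nat.lt_or_ge m (n + 1) with h' | h'
      · exact le_trans (hfstep n) (ih (by omega))
      · have hm : m = n + 1 := by omega
        rw [hm]
  have hA : ∀ t, max (s + 1) (μ.colLen 0) ≤ t → f t = 0 := by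
    intro t ht
    have h1 := le_max_left (s + 1) (μ.colLen 0)
    have h2 := le_max_right (s + 1) (μ.colLen 0)
    rw [hfgt t (by omega)]
    exact rowLen_eq_zero_iff.mpr (by omega)
  set ξ := ydOfFn f hf _ hA with hξdef
  have hrowlen : ∀ t, ξ.rowLen t = f t := fun t => rowLen_ydOfFn f hf _ hA t
  have hle : μ ≤ ξ := by
    refine le_of_rowLen_le fun t => ?_
    have e0 := hrowlen t
    by_cases h1 : t < r
    · have e1 := hflt t h1; omega
    by_cases h2 : t = r
    · have e1 : f t = xr := by rw [h2, hfr]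
      have e2 : μ.rowLen t = μ.rowLen r := by rw [h2]
      omega
    by_cases h3 : t ≤ s
    · have e1 := hfmid t (by omega) h3
      have e2 := μ.rowLen_anti (t - 1) t (by omega)
      omega
    · have e1 := hfgt t (by omega); omega
  have hrr : RibbonRows μ ξ r s := by
    refine ⟨hrs, fun t => ?_, fun t h1 h2 => ?_⟩
    · have e0 := hrowlen t
      by_cases h1 : t < r
      · have e1 := hflt t h1; omega
      by_cases h2 : t = r
      · have e1 : f t = xr := by rw [h2, hfr]
        have e2 : μ.rowLen t = μ.rowLen r := by rw [h2]
        omega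
      by_cases h3 : t ≤ s
      · have e1 := hfmid t (by omega) h3
        have e2 := μ.rowLen_anti (t - 1) t (by omega)
        omega
      · have e1 := hfgt t (by omega); omega
    · have e0 := hrowlen (t + 1)
      have e1 := hfmid (t + 1) (by omega) (by omega)
      have e2 : μ.rowLen (t + 1 - 1) = μ.rowLen t := by rw [Nat.add_sub_cancel]
      omega
  have hcard : (skewCells μ ξ).card = i := by
    have hc := ribbon_card hle hrr
    have e0 := hrowlen r
    have hgoal : ((skewCells μ ξ).card : ℤ) = (i : ℤ) := by
      unfold bet at hsb
      omega
    exact_mod_cast hgoal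
  exact ⟨ξ, r, s, ribbonRows_isRibbon hle hrr, hcard, hrr, hsb⟩

lemma rem_construct {μ : YoungDiagram} {b : ℤ} {i : ℕ} (hi : 1 ≤ i)
    (hnb : ¬ MemB μ b) (hb : MemB μ (b + i)) :
    ∃ lam r s, IsRibbon lam μ ∧ (skewCells lam μ).card = i ∧
      RibbonRows lam μ r s ∧ bet lam s = b := by
  classical
  obtain ⟨r, hrb⟩ := hb
  have hex : ∃ t, bet μ t < b := by
    refine ⟨μ.colLen 0 + b.natAbs + 1, ?_⟩
    have h1 : μ.rowLen (μ.colLen 0 + b.natAbs + 1) = 0 := rowLen_eq_zero_iff.mpr (by omega)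
    unfold bet
    omega
  set s' := Nat.find hex with hs'def
  have hs' : bet μ s' < b := Nat.find_spec hex
  have hs'min : ∀ t, t < s' → b < bet μ t := by
    intro t ht
    have h1 : ¬ bet μ t < b := Nat.find_min hex ht
    have h2 : bet μ t ≠ b := fun hh => hnb ⟨t, hh⟩
    omega
  have hs'pos : 1 ≤ s' := by
    by_contra hc
    have h0 : s' = 0 := by omega
    have h1 := bet_anti (μ := μ) (Nat.zero_le r)
    rw [h0] at hs'
    omega
  set s := s' - 1 with hsdef
  have hs1 : bet μ (s + 1) < b := by rw [show s + 1 = s' by omega]; exact hs'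
  have hs2 : ∀ t, t ≤ s → b < bet μ t := fun t ht => hs'min t (by omega)
  have hrs : r ≤ s := by
    by_contra hc
    have h1 : bet μ r ≤ bet μ (s + 1) := bet_anti (by omega)
    omega
  have hys_nonneg : 0 ≤ b + s := by
    have h0 : (0:ℤ) ≤ (μ.rowLen (s + 1) : ℤ) := Int.ofNat_nonneg _
    unfold bet at hs1
    omega
  set ys := (b + s).toNat with hysdef
  have hys : (ys : ℤ) = b + s := Int.toNat_of_nonneg hys_nonneg
  have hys_lt : ys < μ.rowLen s := by
    have := hs2 s le_rfl
    unfold bet at this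
    omega
  have hys_ge : μ.rowLen (s + 1) ≤ ys := by
    unfold bet at hs1
    omega
  have hμs : 1 ≤ μ.rowLen s := by omega
  have hμr : (μ.rowLen r : ℤ) = b + i + r := by unfold bet at hrb; omega
  set g : ℕ → ℕ := fun t =>
    if t < r then μ.rowLen t else if t < s then μ.rowLen (t + 1) - 1
    else if t = s then ys else μ.rowLen t with hgdef
  have hglt : ∀ t, t < r → g t = μ.rowLen t := by
    intro t ht; simp only [hgdef]; rw [if_pos ht]
  have hgmid : ∀ t, r ≤ t → t < s → g t = μ.rowLen (t + 1) - 1 := by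
    intro t h1 h2; simp only [hgdef]; rw [if_neg (by omega), if_pos h2]
  have hgs : g s = ys := by simp [hgdef]; omega
  have hggt : ∀ t, s < t → g t = μ.rowLen t := by
    intro t ht; simp only [hgdef]; rw [if_neg (by omega), if_neg (by omega), if_neg (by omega)]
  -- row lengths in the relevant range are positive
  have hpos : ∀ t, t ≤ s → 1 ≤ μ.rowLen t := fun t ht =>
    le_trans hμs (μ.rowLen_anti t s ht)
  have hgstep : ∀ t, g (t + 1) ≤ g t := by
    intro t
    rcases lt_trichotomy (t + 1) r with h1 | h1 | h1
    · have e1 := hglt _ h1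
      have e2 := hglt t (by omega)
      have e3 := μ.rowLen_anti t (t + 1) (by omega)
      omega
    · have e2 := hglt t (by omega)
      rcases lt_or_ge (t + 1) s with h2 | h2
      · have e1 := hgmid (t + 1) (by omega) h2
        have e3 := μ.rowLen_anti t (t + 1 + 1) (by omega)
        omega
      · have hts : t + 1 = s := by omega
        have e1 : g (t + 1) = ys := by rw [hts, hgs]
        have e3 : μ.rowLen s ≤ μ.rowLen t := μ.rowLen_anti t s (by omega)
        omega
    · rcases lt_or_ge (t + 1) s with h2 | h2
      · have e1 := hgmid (t + 1) (by omega) h2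
        have e2 := hgmid t (by omega) (by omega)
        have e3 := μ.rowLen_anti (t + 1) (t + 1 + 1) (by omega)
        omega
      · rcases lt_trichotomy t s with h3 | h3 | h3
        · -- t < s and t+1 ≥ s, so t+1 = s
          have hts : t + 1 = s := by omega
          have e1 : g (t + 1) = ys := by rw [hts, hgs]
          have e2 := hgmid t (by omega) h3
          have e3 : μ.rowLen (t + 1) = μ.rowLen s := by rw [hts]
          omega
        · have e1 := hggt (t + 1) (by omega)
          have e2 : g t = ys := by rw [h3, hgs]
          have e3 : μ.rowLen (t + 1) ≤ μ.rowLen (s + 1) := μ.rowLen_anti _ _ (by omega)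
          omega
        · have e1 := hggt (t + 1) (by omega)
          have e2 := hggt t h3
          have e3 := μ.rowLen_anti t (t + 1) (by omega)
          omega
  have hg : ∀ m n : ℕ, m ≤ n → g n ≤ g m := by
    intro m n h
    induction n with
    | zero =>
      have hm : m = 0 := Nat.le_zero.mp h
      rw [hm]
    | succ n ih =>
      rcases Nat.lt_or_ge m (n + 1) with h' | h'
      · exact le_trans (hgstep n) (ih (by omega))
      · have hm : m = n + 1 := by omega
        rw [hm]
  have hA : ∀ t, max (s + 1) (μ.colLen 0) ≤ t → g t = 0 := by
    intro t ht
    have h1 := le_max_left (s + 1) (μ.colLen 0)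
    have h2 := le_max_right (s + 1) (μ.colLen 0)
    rw [hggt t (by omega)]
    exact rowLen_eq_zero_iff.mpr (by omega)
  set lam := ydOfFn g hg _ hA with hlamdef
  have hrowlen : ∀ t, lam.rowLen t = g t := fun t => rowLen_ydOfFn g hg _ hA t
  have hle : lam ≤ μ := by
    refine le_of_rowLen_le fun t => ?_
    have e0 := hrowlen t
    by_cases h1 : t < r
    · have e1 := hglt t h1; omega
    by_cases h2 : t < s
    · have e1 := hgmid t (by omega) h2
      have e2 := μ.rowLen_anti t (t + 1) (by omega)
      omega
    by_cases h3 : t = s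
    · have e1 : g t = ys := by rw [h3, hgs]
      have e2 : μ.rowLen t = μ.rowLen s := by rw [h3]
      omega
    · have e1 := hggt t (by omega); omega
  have hrr : RibbonRows lam μ r s := by
    refine ⟨hrs, fun t => ?_, fun t h1 h2 => ?_⟩
    · have e0 := hrowlen t
      by_cases h1 : t < r
      · have e1 := hglt t h1; omega
      by_cases h2 : t < s
      · have e1 := hgmid t (by omega) h2
        have e2 := μ.rowLen_anti t (t + 1) (by omega)
        have e3 := hpos (t + 1) (by omega)
        omega
      by_cases h3 : t = s
      · have e1 : g t = ys := by rw [h3, hgs]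
        have e2 : μ.rowLen t = μ.rowLen s := by rw [h3]
        omega
      · have e1 := hggt t (by omega); omega
    · -- μ.rowLen (t+1) = lam.rowLen t + 1  for r ≤ t < s
      have e0 := hrowlen t
      have e1 := hgmid t h1 h2
      have e3 := hpos (t + 1) (by omega)
      omega
  have hbetlam : bet lam s = b := by
    have e0 := hrowlen s
    unfold bet
    omega
  have hcard : (skewCells lam μ).card = i := by
    have hc := ribbon_card hle hrr
    have e0 := hrowlen s
    have hgoal : ((skewCells lam μ).card : ℤ) = (i : ℤ) := by omega
    exact_mod_cast hgoal
  exact ⟨lam, r, s, ribbonRows_isRibbon hle hrr, hcard, hrr, hbetlam⟩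

lemma add_inj {μ ξ ξ' : YoungDiagram} {i : ℕ} {b : ℤ}
    (h : IsRibbon μ ξ) (hc : (skewCells μ ξ).card = i)
    (h' : IsRibbon μ ξ') (hc' : (skewCells μ ξ').card = i)
    {r s r' s' : ℕ} (hrr : RibbonRows μ ξ r s) (hrr' : RibbonRows μ ξ' r' s')
    (hbs : bet μ s = b) (hbs' : bet μ s' = b) : ξ = ξ' := by
  have hseq : s = s' := bet_inj (hbs.trans hbs'.symm)
  subst hseq
  obtain ⟨f1, f2, f3, f4⟩ := add_facts h hrr hc
  obtain ⟨g1, g2, g3, g4⟩ := add_facts h' hrr' hc'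
  have hreq : r = r' := by
    rcases lt_trichotomy r r' with hh | hh | hh
    · have e1 := g3 r hh
      have e2 : bet ξ r = bet μ s + i := f1
      omega
    · exact hh
    · have e1 := f3 r' hh
      omega
  subst hreq
  refine yd_ext fun t => ?_
  by_cases h1 : t < r
  · rw [unocc_eq h.1 hrr (by omega), unocc_eq h'.1 hrr' (by omega)]
  by_cases h2 : t = r
  · subst h2
    have e1 : bet ξ t = bet ξ' t := by omega
    unfold bet at e1
    omega
  by_cases h3 : t ≤ s
  · have e1 := hrr.2.2 (t - 1) (by omega) (by omega)
    have e2 := hrr'.2.2 (t - 1) (by omega) (by omega)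
    have e3 : t - 1 + 1 = t := by omega
    rw [e3] at e1 e2
    omega
  · rw [unocc_eq h.1 hrr (by omega), unocc_eq h'.1 hrr' (by omega)]

lemma rem_inj {μ lam lam' : YoungDiagram} {i : ℕ} {b : ℤ}
    (h : IsRibbon lam μ) (hc : (skewCells lam μ).card = i)
    (h' : IsRibbon lam' μ) (hc' : (skewCells lam' μ).card = i)
    {r s r' s' : ℕ} (hrr : RibbonRows lam μ r s) (hrr' : RibbonRows lam' μ r' s')
    (hbs : bet lam s = b) (hbs' : bet lam' s' = b) : lam = lam' := by
  obtain ⟨f1, f2, f3, f4⟩ := rem_facts h hrr hc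
  obtain ⟨g1, g2, g3, g4⟩ := rem_facts h' hrr' hc'
  rw [hbs] at f1 f2 f3
  rw [hbs'] at g1 g2 g3
  have hseq : s = s' := by
    rcases lt_trichotomy s s' with hh | hh | hh
    · have := bet_anti (μ := μ) (show s + 1 ≤ s' by omega); omega
    · exact hh
    · have := bet_anti (μ := μ) (show s' + 1 ≤ s by omega); omega
  subst hseq
  have hreq : r = r' := bet_inj (f1.trans g1.symm)
  subst hreq
  refine yd_ext fun t => ?_
  by_cases h1 : t < r
  · have e1 := unocc_eq h.1 hrr (show ¬(r ≤ t ∧ t ≤ s) by omega)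
    have e2 := unocc_eq h'.1 hrr' (show ¬(r ≤ t ∧ t ≤ s) by omega)
    omega
  by_cases h3 : t < s
  · have e1 := hrr.2.2 t (by omega) h3
    have e2 := hrr'.2.2 t (by omega) h3
    omega
  by_cases h2 : t = s
  · subst h2
    unfold bet at hbs hbs'
    omega
  · have e1 := unocc_eq h.1 hrr (show ¬(r ≤ t ∧ t ≤ s) by omega)
    have e2 := unocc_eq h'.1 hrr' (show ¬(r ≤ t ∧ t ≤ s) by omega)
    omega

lemma count_beta (P : ℤ → Prop) (M : ℕ)
    (hlo : ∀ b : ℤ, b ≤ -(M:ℤ) → P b) (hhi : ∀ b : ℤ, (M:ℤ) ≤ b → ¬ P b)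
    (i : ℕ) (hi : 1 ≤ i) :
    Nat.card {b : ℤ // P b ∧ ¬ P (b + i)} =
      i + Nat.card {b : ℤ // ¬ P b ∧ P (b + i)} := by
  classical
  set L : ℤ := -(M:ℤ) - i with hL
  set R : ℤ := (M:ℤ) with hR
  set D := (Finset.Ico L R).filter (fun b => P b ∧ ¬ P (b + i)) with hD
  set U := (Finset.Ico L R).filter (fun b => ¬ P b ∧ P (b + i)) with hU
  have hsetD : {b : ℤ | P b ∧ ¬ P (b + i)} = ↑D := by
    ext b
    simp only [hD, Set.mem_setOf_eq, Finset.coe_filter, Finset.mem_Ico]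
    constructor
    · rintro ⟨h1, h2⟩
      refine ⟨⟨?_, ?_⟩, h1, h2⟩
      · by_contra hc
        exact h2 (hlo (b + i) (by omega))
      · by_contra hc
        exact hhi b (by omega) h1
    · rintro ⟨_, h1, h2⟩; exact ⟨h1, h2⟩
  have hsetU : {b : ℤ | ¬ P b ∧ P (b + i)} = ↑U := by
    ext b
    simp only [hU, Set.mem_setOf_eq, Finset.coe_filter, Finset.mem_Ico]
    constructor
    · rintro ⟨h1, h2⟩
      refine ⟨⟨?_, ?_⟩, h1, h2⟩
      · by_contra hc
        exact h1 (hlo b (by omega))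
      · by_contra hc
        exact hhi (b + i) (by omega) h2
    · rintro ⟨_, h1, h2⟩; exact ⟨h1, h2⟩
  have hcardD : Nat.card {b : ℤ // P b ∧ ¬ P (b + i)} = D.card := by
    rw [← Set.ncard_coe_finset, ← hsetD]
    exact Nat.card_coe_set_eq _
  have hcardU : Nat.card {b : ℤ // ¬ P b ∧ P (b + i)} = U.card := by
    rw [← Set.ncard_coe_finset, ← hsetU]
    exact Nat.card_coe_set_eq _
  rw [hcardD, hcardU]
  -- telescoping count
  set F : ℤ → ℤ := fun b => if P b then 1 else 0 with hF
  have key1 : ∑ b ∈ Finset.Ico L R, (F b - F (b + i)) = (D.card : ℤ) - U.card := by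
    have hterm : ∀ b ∈ Finset.Ico L R, F b - F (b + i) =
        (if P b ∧ ¬ P (b + i) then (1:ℤ) else 0) -
          (if ¬ P b ∧ P (b + i) then (1:ℤ) else 0) := by
      intro b _
      by_cases h1 : P b <;> by_cases h2 : P (b + i) <;> simp [hF, h1, h2]
    rw [Finset.sum_congr rfl hterm, Finset.sum_sub_distrib, Finset.sum_boole,
      Finset.sum_boole]
  have hshift : ∑ b ∈ Finset.Ico L R, F (b + i) =
      ∑ b ∈ Finset.Ico (L + i) (R + i), F b := by
    rw [← Finset.map_add_right_Ico, Finset.sum_map]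
    rfl
  have hLi : L + i = -(M:ℤ) := by omega
  have hM0 : (0:ℤ) ≤ (M:ℤ) := Int.ofNat_nonneg _
  have split1 : ∑ b ∈ Finset.Ico L (L + i), F b + ∑ b ∈ Finset.Ico (L + i) R, F b =
      ∑ b ∈ Finset.Ico L R, F b := by
    rw [← Finset.sum_union (Finset.Ico_disjoint_Ico_consecutive L (L + i) R),
      Finset.Ico_union_Ico_eq_Ico (by omega) (by omega)]
  have split2 : ∑ b ∈ Finset.Ico (L + i) R, F b + ∑ b ∈ Finset.Ico R (R + i), F b =
      ∑ b ∈ Finset.Ico (L + i) (R + i), F b := by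
    rw [← Finset.sum_union (Finset.Ico_disjoint_Ico_consecutive (L + i) R (R + i)),
      Finset.Ico_union_Ico_eq_Ico (by omega) (by omega)]
  have hFlo : ∑ b ∈ Finset.Ico L (L + i), F b = i := by
    rw [Finset.sum_congr rfl (fun b hb => show F b = 1 by
      rw [Finset.mem_Ico] at hb
      simp only [hF]
      rw [if_pos (hlo b (by omega))])]
    rw [Finset.sum_const, Int.card_Ico]
    simp
  have hFhi : ∑ b ∈ Finset.Ico R (R + i), F b = 0 := by
    refine Finset.sum_eq_zero fun b hb => ?_
    rw [Finset.mem_Ico] at hb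
    simp only [hF]
    rw [if_neg (hhi b (by omega))]
  have key2 : ∑ b ∈ Finset.Ico L R, (F b - F (b + i)) = i := by
    rw [Finset.sum_sub_distrib, hshift]
    omega
  omega

/-- The number of partitions `ξ ⊇ μ` with `ξ/μ` a ribbon of size `i` equals `i`
plus the number of partitions `λ ⊆ μ` with `μ/λ` a ribbon of size `i`. -/
theorem stmt6 (μ : YoungDiagram) (i : ℕ) (hi : 1 ≤ i) :
    Nat.card {ξ : YoungDiagram // IsRibbon μ ξ ∧ (skewCells μ ξ).card = i} =
      i + Nat.card {lam : YoungDiagram //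
        IsRibbon lam μ ∧ (skewCells lam μ).card = i} := by
  classical
  have e1 : Nat.card {ξ : YoungDiagram // IsRibbon μ ξ ∧ (skewCells μ ξ).card = i} =
      Nat.card {b : ℤ // MemB μ b ∧ ¬ MemB μ (b + i)} := by
    refine natCard_eq_of_rel (fun ξ b => ∃ r s, RibbonRows μ ξ r s ∧ bet μ s = b)
      ?_ ?_ ?_ ?_
    · rintro ξ ⟨hrib, hcard⟩
      obtain ⟨r, s, hrr⟩ := isRibbon_ribbonRows hrib
      obtain ⟨f1, f2, f3, f4⟩ := add_facts hrib hrr hcard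
      exact ⟨bet μ s, ⟨⟨s, rfl⟩, f4⟩, r, s, hrr, rfl⟩
    · rintro b ⟨hb, hnb⟩
      obtain ⟨ξ, r, s, h1, h2, h3, h4⟩ := add_construct hi hb hnb
      exact ⟨ξ, ⟨h1, h2⟩, r, s, h3, h4⟩
    · rintro ξ ξ' b ⟨h, hc⟩ ⟨h', hc'⟩ ⟨r, s, hrr, hbs⟩ ⟨r', s', hrr', hbs'⟩
      exact add_inj h hc h' hc' hrr hrr' hbs hbs'
    · rintro ξ b b' ⟨r, s, hrr, hbs⟩ ⟨r', s', hrr', hbs'⟩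
      obtain ⟨hre, hse⟩ := ribbonRows_unique hrr hrr'
      rw [← hbs, ← hbs', hse]
  have e2 : Nat.card {lam : YoungDiagram // IsRibbon lam μ ∧ (skewCells lam μ).card = i} =
      Nat.card {b : ℤ // ¬ MemB μ b ∧ MemB μ (b + i)} := by
    refine natCard_eq_of_rel (fun lam b => ∃ r s, RibbonRows lam μ r s ∧ bet lam s = b)
      ?_ ?_ ?_ ?_
    · rintro lam ⟨hrib, hcard⟩
      obtain ⟨r, s, hrr⟩ := isRibbon_ribbonRows hrib
      obtain ⟨f1, f2, f3, f4⟩ := rem_facts hrib hrr hcard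
      exact ⟨bet lam s, ⟨f4, ⟨r, f1⟩⟩, r, s, hrr, rfl⟩
    · rintro b ⟨hnb, hb⟩
      obtain ⟨lam, r, s, h1, h2, h3, h4⟩ := rem_construct hi hnb hb
      exact ⟨lam, ⟨h1, h2⟩, r, s, h3, h4⟩
    · rintro lam lam' b ⟨h, hc⟩ ⟨h', hc'⟩ ⟨r, s, hrr, hbs⟩ ⟨r', s', hrr', hbs'⟩
      exact rem_inj h hc h' hc' hrr hrr' hbs hbs'
    · rintro lam b b' ⟨r, s, hrr, hbs⟩ ⟨r', s', hrr', hbs'⟩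
      obtain ⟨hre, hse⟩ := ribbonRows_unique hrr hrr'
      rw [← hbs, ← hbs', hse]
  rw [e1, e2]
  refine count_beta (MemB μ) (max (μ.rowLen 0 + 1) (μ.colLen 0)) ?_ ?_ i hi
  · intro b hb
    have h1 := le_max_right (μ.rowLen 0 + 1) (μ.colLen 0)
    exact memB_of_le (by omega)
  · intro b hb
    have h1 := le_max_left (μ.rowLen 0 + 1) (μ.colLen 0)
    exact notMemB_of_gt (by omega)
end

section
/- Let E be a module over a commutative ring, let r be a scalar, and let D, U be linear endomorphisms of E satisfying D∘U = U∘D + r·id. Then for every positive integer ℓ, D^ℓ∘U^ℓ = (U∘D + r·id)∘(U∘D + 2r·id)∘⋯∘(U∘D + ℓr·id). -/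
/-! Commuting `D` past `Uⁿ` one factor at a time gives `D Uⁿ⁺¹ = Uⁿ⁺¹ D + (n+1) r Uⁿ`. Hence
`Dˡ⁺¹ Uˡ⁺¹ = Dˡ (Uˡ⁺¹ D + (l+1) r Uˡ) = Dˡ Uˡ (U D + (l+1) r)`, and the identity follows by
induction on `l`. -/

section WeylRelation

variable {R A : Type*} [CommSemiring R] [Semiring A] [Algebra R A] {d u : A} {r : R}

theorem mul_pow_succ_of_mul_eq_add_smul_one (h : d * u = u * d + r • 1) (n : ℕ) :
    d * u ^ (n + 1) = u ^ (n + 1) * d + (((n + 1 : ℕ) : R) * r) • u ^ n := by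
  induction n with
  | zero => simpa using h
  | succ n ih =>
    calc d * u ^ (n + 2) = (d * u ^ (n + 1)) * u := by rw [mul_assoc, ← pow_succ]
      _ = u ^ (n + 1) * (d * u) + (((n + 1 : ℕ) : R) * r) • u ^ (n + 1) := by
        rw [ih, add_mul, mul_assoc, smul_mul_assoc, ← pow_succ]
      _ = u ^ (n + 2) * d + (((n + 2 : ℕ) : R) * r) • u ^ (n + 1) := by
        rw [h, mul_add, ← mul_assoc, ← pow_succ, mul_smul_comm, mul_one, add_assoc, ← add_smul]
        push_cast
        ring_nf

theorem pow_mul_pow_eq_prod_of_mul_eq_add_smul_one (h : d * u = u * d + r • 1) (l : ℕ) :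
    d ^ l * u ^ l = ((List.range l).map (fun k => u * d + (((k + 1 : ℕ) : R) * r) • 1)).prod := by
  induction l with
  | zero => simp
  | succ l ih =>
    calc d ^ (l + 1) * u ^ (l + 1) = d ^ l * (d * u ^ (l + 1)) := by rw [pow_succ, mul_assoc]
      _ = d ^ l * u ^ l * (u * d + (((l + 1 : ℕ) : R) * r) • 1) := by
        rw [mul_pow_succ_of_mul_eq_add_smul_one h, pow_succ, mul_add, mul_add, mul_smul_comm,
          mul_smul_comm, mul_one, mul_assoc, mul_assoc]
      _ = _ := by rw [ih, List.range_succ, List.map_append, List.prod_append]; simp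

end WeylRelation

theorem stmt8_general {R E : Type*} [CommRing R] [AddCommGroup E] [Module R E]
    (D U : Module.End R E) (r : R)
    (h : D * U = U * D + r • (1 : Module.End R E)) (l : ℕ) :
    D ^ l * U ^ l =
      ((List.range l).map
        (fun k => U * D + (((k + 1 : ℕ) : R) * r) • (1 : Module.End R E))).prod :=
  pow_mul_pow_eq_prod_of_mul_eq_add_smul_one h l

/-- Stanley's commutation identity: if `DU = UD + r·id` then
`DˡUˡ = (UD + r·id)(UD + 2r·id)⋯(UD + lr·id)`. -/
theorem stmt8 {R E : Type*} [CommRing R] [AddCommGroup E] [Module R E]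
    (D U : Module.End R E) (r : R)
    (h : D * U = U * D + r • (1 : Module.End R E)) (l : ℕ) (hl : 0 < l) :
    D ^ l * U ^ l =
      ((List.range l).map
        (fun k => U * D + (((k + 1 : ℕ) : R) * r) • (1 : Module.End R E))).prod :=
  stmt8_general D U r h l
end

section
/- Let μ be a partition with m_i parts equal to i for each i ≥ 1. Then the cardinality of HI_spec(μ) equals ∏_{i≥1} c_{i,m_i}. -/
/-- The numbers `c_{i,m}` of the column-sum formula: `0` if `i` is even and `m`
odd, `(m-1)‼ i^{m/2}` if `i` and `m` are even, and
`∑_k C(m, m-2k) (2k-1)‼ i^k` if `i` is odd. -/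
def cim (i m : ℕ) : ℕ :=
  if Even i then
    (if Even m then (m - 1).doubleFactorial * i ^ (m / 2) else 0)
  else
    ∑ k ∈ Finset.range (m / 2 + 1),
      m.choose (m - 2 * k) * (2 * k - 1).doubleFactorial * i ^ k

/-! A special hook involution of content `μ` is an involution `σ` of the parts preserving their
sizes, with a height below the size attached to each part, constant on the 2-cycles of `σ`; fixed
points must have odd size and height `0`. Look at one part `a`, of size `i`: either `σ` fixes it,
which needs `i` odd and leaves a special hook involution of the other parts, or `σ` pairs it with
one of the other parts of size `i`, and the pair carries any of `i` heights. Only the `i`-th factor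
of `∏ⱼ c_{j,mⱼ}` sees the removal, and `c_{i,m}` obeys the matching recursion
`c_{i,m+1} = [i odd] c_{i,m} + m i c_{i,m-1}`. -/

open Finset Function
open scoped Nat

-- The odd case of `cim`, with the range not truncated at `m / 2` (the extra terms vanish).
def pairingSum (i m : ℕ) : ℕ :=
  ∑ k ∈ range (m + 1), m.choose (2 * k) * (2 * k - 1)‼ * i ^ k

lemma cim_of_not_even {i : ℕ} (hi : ¬Even i) (m : ℕ) : cim i m = pairingSum i m := by
  rw [cim, if_neg hi, pairingSum]
  refine sum_subset_zero_on_sdiff (range_subset_range.2 (by omega)) (fun k hk => ?_)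
    (fun k hk => ?_)
  · have : m < 2 * k := by simp only [mem_sdiff, mem_range] at hk; omega
    simp [Nat.choose_eq_zero_of_lt this]
  · rw [Nat.choose_symm (by simp only [mem_range] at hk; omega)]

lemma choose_add_two_mul_doubleFactorial (m t : ℕ) :
    (m + 2).choose (2 * t + 2) * (2 * t + 1)‼ =
      (m + 1).choose (2 * t + 2) * (2 * t + 1)‼ + (m + 1) * (m.choose (2 * t) * (2 * t - 1)‼) := by
  rw [Nat.choose_succ_succ', add_mul, Nat.doubleFactorial_add_one, ← mul_assoc (m + 1),
    Nat.add_one_mul_choose_eq]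
  ring

lemma pairingSum_add_two (i m : ℕ) :
    pairingSum i (m + 2) = pairingSum i (m + 1) + (m + 1) * i * pairingSum i m := by
  have hterm : ∀ t, (m + 2).choose (2 * (t + 1)) * (2 * (t + 1) - 1)‼ * i ^ (t + 1) =
      (m + 1).choose (2 * (t + 1)) * (2 * (t + 1) - 1)‼ * i ^ (t + 1) +
        (m + 1) * i * (m.choose (2 * t) * (2 * t - 1)‼ * i ^ t) := fun t => by
    rw [show 2 * (t + 1) = 2 * t + 2 by ring, show 2 * t + 2 - 1 = 2 * t + 1 by omega,
      choose_add_two_mul_doubleFactorial]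
    ring
  have hlast : ∑ t ∈ range (m + 2), m.choose (2 * t) * (2 * t - 1)‼ * i ^ t = pairingSum i m := by
    rw [sum_range_succ, Nat.choose_eq_zero_of_lt (by omega : m < 2 * (m + 1))]
    simp [pairingSum]
  have hfirst : pairingSum i (m + 1) =
      ∑ t ∈ range (m + 2), (m + 1).choose (2 * (t + 1)) * (2 * (t + 1) - 1)‼ * i ^ (t + 1) + 1 := by
    rw [sum_range_succ, Nat.choose_eq_zero_of_lt (by omega : m + 1 < 2 * (m + 1 + 1)), pairingSum,
      sum_range_succ' _ (m + 1)]
    simp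
  rw [pairingSum, sum_range_succ', sum_congr rfl fun t _ => hterm t, sum_add_distrib, ← mul_sum,
    hlast, hfirst]
  simp only [mul_zero, Nat.choose_zero_right, Nat.zero_sub, Nat.doubleFactorial, pow_zero]
  ring

lemma cim_zero (i : ℕ) : cim i 0 = 1 := by
  simp [cim]

lemma cim_succ (i m : ℕ) :
    cim i (m + 1) = (if Odd i then 1 else 0) * cim i m + m * i * cim i (m - 1) := by
  by_cases hi : Even i
  · rw [if_neg (Nat.not_odd_iff_even.2 hi), zero_mul, zero_add]
    rcases m with _ | k
    · simp [cim, hi]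
    · simp only [cim, if_pos hi, Nat.add_sub_cancel, Nat.even_add_one, not_not]
      split_ifs
      · rw [show (k + 2) / 2 = k / 2 + 1 by omega, Nat.doubleFactorial_add_one, pow_succ]
        ring
      · simp
  · rw [if_pos (Nat.not_even_iff_odd.1 hi), one_mul]
    simp only [cim_of_not_even hi]
    rcases m with _ | k
    · simp [pairingSum, sum_range_succ]
    · exact pairingSum_add_two i k

lemma prod_card_filter_eq_mul_prod_erase {α M : Type*} [CommMonoid M] (g : ℕ → ℕ → M)
    {μ : α → ℕ} {s t : Finset α} {T : Finset ℕ} {i : ℕ} (hi : i ∈ T) (hts : t ⊆ s)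
    (hμ : ∀ c ∈ s, c ∉ t → μ c = i) :
    ∏ j ∈ T, g j #{c ∈ t | μ c = j} =
      g i #{c ∈ t | μ c = i} * ∏ j ∈ T.erase i, g j #{c ∈ s | μ c = j} := by
  rw [← mul_prod_erase T _ hi]
  refine congrArg _ (prod_congr rfl fun j hj => congrArg (g j) (congrArg card (ext fun c => ?_)))
  simp only [mem_filter]
  exact ⟨fun h => ⟨hts h.1, h.2⟩,
    fun h => ⟨by_contra fun hc => ne_of_mem_erase hj (h.2 ▸ hμ c h.1 hc), h.2⟩⟩

section LabelledInvolution

variable {α : Type*}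

/-- An involution of `s`, extended by the identity outside `s`, whose 2-cycles carry labels below
`μ`; fixed points need odd `μ` and label `0`. For `s = univ` these are the special hook
involutions with hook sizes `μ` and heights the labels. -/
structure IsLabelledInvolution (s : Finset α) (μ : α → ℕ) (f : α → α) (h : α → ℕ) : Prop where
  involutive : Involutive f
  apply_of_notMem : ∀ a ∉ s, f a = a
  bound_apply : ∀ a, μ (f a) = μ a
  label_apply : ∀ a, h (f a) = h a
  label_lt : ∀ a ∈ s, h a < μ a
  label_of_fixed : ∀ a, f a = a → h a = 0
  odd_of_fixed : ∀ a ∈ s, f a = a → Odd (μ a)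

abbrev LabelledInvolution (s : Finset α) (μ : α → ℕ) : Type _ :=
  {p : (α → α) × (α → ℕ) // IsLabelledInvolution s μ p.1 p.2}

variable {s : Finset α} {μ : α → ℕ} {a b : α}

namespace IsLabelledInvolution

variable {f : α → α} {h : α → ℕ}

lemma apply_mem (hf : IsLabelledInvolution s μ f h) (ha : a ∈ s) : f a ∈ s := by
  by_contra hfa
  have : a = f a := (hf.involutive a).symm.trans (hf.apply_of_notMem _ hfa)
  exact hfa (this ▸ ha)

lemma label_of_notMem (hf : IsLabelledInvolution s μ f h) (ha : a ∉ s) : h a = 0 :=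
  hf.label_of_fixed a (hf.apply_of_notMem a ha)

end IsLabelledInvolution

instance : Finite (LabelledInvolution s μ) := by
  refine Finite.of_injective (β := (s → s) × ((a : s) → Fin (μ a)))
    (fun p => (fun a => ⟨p.1.1 a, p.2.apply_mem a.2⟩, fun a => ⟨p.1.2 a, p.2.label_lt a a.2⟩))
    fun p q hpq => ?_
  simp only [Prod.mk.injEq, funext_iff, Subtype.forall, Subtype.ext_iff, Fin.ext_iff] at hpq
  ext a
  · by_cases ha : a ∈ s
    · exact hpq.1 a ha
    · rw [p.2.apply_of_notMem a ha, q.2.apply_of_notMem a ha]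
  · by_cases ha : a ∈ s
    · exact hpq.2 a ha
    · rw [p.2.label_of_notMem ha, q.2.label_of_notMem ha]

lemma card_labelledInvolution_empty : Nat.card (LabelledInvolution (∅ : Finset α) μ) = 1 := by
  have hid : IsLabelledInvolution (∅ : Finset α) μ id 0 :=
    ⟨fun _ => rfl, by simp, by simp, by simp, by simp, by simp, by simp⟩
  refine Nat.card_eq_one_iff_exists.2 ⟨⟨(id, 0), hid⟩, fun p => ?_⟩
  ext a
  · exact p.2.apply_of_notMem a (notMem_empty a)
  · exact p.2.label_of_notMem (notMem_empty a)

lemma card_labelledInvolution_eq_sum (ha : a ∈ s) :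
    Nat.card (LabelledInvolution s μ) =
      ∑ b ∈ s, Nat.card {p : LabelledInvolution s μ // p.1.1 a = b} := by
  rw [← Nat.card_congr (Equiv.sigmaFiberEquiv
    fun p : LabelledInvolution s μ => (⟨p.1.1 a, p.2.apply_mem ha⟩ : s)), Nat.card_sigma,
    ← sum_coe_sort s]
  exact sum_congr rfl fun b _ => Nat.card_congr (Equiv.subtypeEquivRight fun p => Subtype.ext_iff)

variable [DecidableEq α]

lemma isLabelledInvolution_erase_iff (ha : a ∈ s) (hodd : Odd (μ a)) {f : α → α} {h : α → ℕ} :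
    IsLabelledInvolution (s.erase a) μ f h ↔ IsLabelledInvolution s μ f h ∧ f a = a := by
  constructor
  · intro hf
    have hfa : f a = a := hf.apply_of_notMem a (notMem_erase a s)
    refine ⟨⟨hf.involutive, fun c hc => hf.apply_of_notMem c (fun h => hc (mem_of_mem_erase h)),
      hf.bound_apply, hf.label_apply, fun c hc => ?_, hf.label_of_fixed, fun c hc => ?_⟩, hfa⟩
    · rcases eq_or_ne c a with rfl | hca
      · rw [hf.label_of_fixed c hfa]
        exact hodd.pos
      · exact hf.label_lt c (mem_erase.2 ⟨hca, hc⟩)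
    · rcases eq_or_ne c a with rfl | hca
      · exact fun _ => hodd
      · exact hf.odd_of_fixed c (mem_erase.2 ⟨hca, hc⟩)
  · rintro ⟨hf, hfa⟩
    refine ⟨hf.involutive, fun c hc => ?_, hf.bound_apply, hf.label_apply,
      fun c hc => hf.label_lt c (mem_of_mem_erase hc), hf.label_of_fixed,
      fun c hc => hf.odd_of_fixed c (mem_of_mem_erase hc)⟩
    rcases eq_or_ne c a with rfl | hca
    · exact hfa
    · exact hf.apply_of_notMem c (fun h => hc (mem_erase.2 ⟨hca, h⟩))

lemma card_labelledInvolution_apply_eq_self (ha : a ∈ s) :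
    Nat.card {p : LabelledInvolution s μ // p.1.1 a = a} =
      if Odd (μ a) then Nat.card (LabelledInvolution (s.erase a) μ) else 0 := by
  split_ifs with hodd
  · exact Nat.card_congr <| (Equiv.subtypeSubtypeEquivSubtypeInter _ _).trans
      (Equiv.subtypeEquivRight fun p => (isLabelledInvolution_erase_iff ha hodd).symm)
  · have : IsEmpty {p : LabelledInvolution s μ // p.1.1 a = a} :=
      ⟨fun p => hodd (p.1.2.odd_of_fixed a ha p.2)⟩
    exact Nat.card_of_isEmpty

namespace IsLabelledInvolution

variable {f : α → α} {h : α → ℕ}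

lemma erase_erase (hf : IsLabelledInvolution s μ f h) (ha : a ∈ s) (hab : f a = b) (hba : b ≠ a) :
    IsLabelledInvolution ((s.erase a).erase b) μ (f ∘ Equiv.swap a b)
      (update (update h a 0) b 0) := by
  have hfb : f b = a := hab ▸ hf.involutive a
  have hb : b ∈ s := hab ▸ hf.apply_mem ha
  have hfc : ∀ c, c ≠ a → c ≠ b → f c ≠ a ∧ f c ≠ b := fun c hca hcb =>
    ⟨fun h => hcb (hf.involutive.injective (h.trans hfb.symm)),
      fun h => hca (hf.involutive.injective (h.trans hab.symm))⟩
  have cases : ∀ c, c = a ∨ c = b ∨ c ≠ a ∧ c ≠ b := by tauto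
  refine ⟨fun c => ?_, fun c hc => ?_, fun c => ?_, fun c => ?_, fun c hc => ?_, fun c hc => ?_,
    fun c hc => ?_⟩ <;> rcases cases c with rfl | rfl | ⟨hca, hcb⟩
  all_goals simp [Equiv.swap_apply_of_ne_of_ne, update_apply, hf.involutive _, hf.bound_apply,
    hf.label_apply, *] at *
  all_goals first
    | exact hf.apply_of_notMem c (by simp [*])
    | exact hf.label_lt c (by simp [*])
    | exact hf.label_of_fixed c hc
    | exact hf.odd_of_fixed c (by simp [*])

lemma of_erase_erase (hf : IsLabelledInvolution ((s.erase a).erase b) μ f h) (ha : a ∈ s)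
    (hb : b ∈ s.erase a) (hμ : μ b = μ a) {v : ℕ} (hv : v < μ a) :
    IsLabelledInvolution s μ (f ∘ Equiv.swap a b) (update (update h a v) b v) := by
  have hfa : f a = a := hf.apply_of_notMem a (by simp)
  have hfb : f b = b := hf.apply_of_notMem b (by simp)
  have hba : b ≠ a := ne_of_mem_erase hb
  have hab : a ≠ b := hba.symm
  have hfc : ∀ c, c ≠ a → c ≠ b → f c ≠ a ∧ f c ≠ b := fun c hca hcb =>
    ⟨fun h => hca (hf.involutive.injective (h.trans hfa.symm)),
      fun h => hcb (hf.involutive.injective (h.trans hfb.symm))⟩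
  have cases : ∀ c, c = a ∨ c = b ∨ c ≠ a ∧ c ≠ b := by tauto
  refine ⟨fun c => ?_, fun c hc => ?_, fun c => ?_, fun c => ?_, fun c hc => ?_, fun c hc => ?_,
    fun c hc => ?_⟩ <;> rcases cases c with rfl | rfl | ⟨hca, hcb⟩
  all_goals simp [Equiv.swap_apply_of_ne_of_ne, hf.involutive _, hf.bound_apply, hf.label_apply,
    *] at *
  all_goals first
    | exact hf.apply_of_notMem c (by simp [*])
    | exact hf.label_lt c (by simp [*])
    | exact hf.label_of_fixed c hc
    | exact hf.odd_of_fixed c (by simp [*])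

end IsLabelledInvolution

-- Swapping `a` and `b` back to fixed points splits off their common label.
def LabelledInvolution.pairEquiv (ha : a ∈ s) (hb : b ∈ s.erase a) (hμ : μ b = μ a) :
    {p : LabelledInvolution s μ // p.1.1 a = b} ≃
      Fin (μ a) × LabelledInvolution ((s.erase a).erase b) μ where
  toFun p := (⟨p.1.1.2 a, p.1.2.label_lt a ha⟩,
    ⟨(p.1.1.1 ∘ Equiv.swap a b, update (update p.1.1.2 a 0) b 0),
      p.1.2.erase_erase ha p.2 (ne_of_mem_erase hb)⟩)
  invFun q := ⟨⟨(q.2.1.1 ∘ Equiv.swap a b, update (update q.2.1.2 a q.1) b q.1),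
      q.2.2.of_erase_erase ha hb hμ q.1.2⟩, by simp [q.2.2.apply_of_notMem b (by simp)]⟩
  left_inv := by
    rintro ⟨⟨⟨f, h⟩, hf⟩, hab : f a = b⟩
    have hhb : h b = h a := hab ▸ hf.label_apply a
    ext c
    · simp
    · by_cases hca : c = a <;> by_cases hcb : c = b <;> simp [update_apply, *]
  right_inv := by
    rintro ⟨v, ⟨f, h⟩, hf⟩
    have hba : b ≠ a := ne_of_mem_erase hb
    have hha : h a = 0 := hf.label_of_notMem (by simp)
    have hhb : h b = 0 := hf.label_of_notMem (by simp)
    ext c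
    · simp [hba.symm]
    · simp
    · by_cases hca : c = a <;> by_cases hcb : c = b <;> simp [update_apply, *]

lemma card_labelledInvolution_apply_eq (ha : a ∈ s) (hb : b ∈ s.erase a) :
    Nat.card {p : LabelledInvolution s μ // p.1.1 a = b} =
      if μ b = μ a then μ a * Nat.card (LabelledInvolution ((s.erase a).erase b) μ) else 0 := by
  split_ifs with hμ
  · rw [Nat.card_congr (LabelledInvolution.pairEquiv ha hb hμ), Nat.card_prod, Nat.card_fin]
  · have : IsEmpty {p : LabelledInvolution s μ // p.1.1 a = b} :=
      ⟨fun p => hμ (p.2 ▸ p.1.2.bound_apply a)⟩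
    exact Nat.card_of_isEmpty

theorem card_labelledInvolution {T : Finset ℕ} (hT : ∀ a ∈ s, μ a ∈ T) :
    Nat.card (LabelledInvolution s μ) = ∏ j ∈ T, cim j #{a ∈ s | μ a = j} := by
  induction s using Finset.strongInduction with
  | H s ih =>
  rcases s.eq_empty_or_nonempty with rfl | ⟨a, ha⟩
  · simp [card_labelledInvolution_empty, cim_zero]
  have hiT := hT a ha
  set i := μ a
  have hk : #{c ∈ s | μ c = i} = #{c ∈ s.erase a | μ c = i} + 1 := by
    rw [filter_erase, card_erase_add_one (mem_filter.2 ⟨ha, rfl⟩ : a ∈ {c ∈ s | μ c = i})]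
  set k := #{c ∈ s.erase a | μ c = i}
  set R := ∏ j ∈ T.erase i, cim j #{c ∈ s | μ c = j}
  have hfixed : Nat.card (LabelledInvolution (s.erase a) μ) = cim i k * R := by
    rw [ih _ (erase_ssubset ha) fun c hc => hT c (mem_of_mem_erase hc),
      prod_card_filter_eq_mul_prod_erase _ hiT (erase_subset a s) fun c hcs hc => ?_]
    obtain rfl : c = a := by_contra fun hca => hc (mem_erase.2 ⟨hca, hcs⟩)
    rfl
  have hpair : ∀ b ∈ s.erase a, μ b = i →
      Nat.card (LabelledInvolution ((s.erase a).erase b) μ) = cim i (k - 1) * R := by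
    intro b hb hμb
    have hsub : (s.erase a).erase b ⊂ s := (erase_ssubset hb).trans (erase_ssubset ha)
    rw [ih _ hsub fun c hc => hT c (hsub.subset hc),
      prod_card_filter_eq_mul_prod_erase _ hiT hsub.subset fun c _ hc => ?_, filter_erase,
      card_erase_of_mem (mem_filter.2 ⟨hb, hμb⟩)]
    obtain rfl | rfl : c = b ∨ c = a := by simp only [mem_erase] at hc; tauto
    exacts [hμb, rfl]
  rw [card_labelledInvolution_eq_sum ha, ← add_sum_erase _ _ ha,
    card_labelledInvolution_apply_eq_self ha,
    sum_congr rfl fun b hb => card_labelledInvolution_apply_eq ha hb, ← sum_filter,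
    sum_congr rfl fun b hb => by rw [hpair b (mem_filter.1 hb).1 (mem_filter.1 hb).2],
    sum_const, smul_eq_mul,
    prod_card_filter_eq_mul_prod_erase _ hiT subset_rfl fun c hc hc' => absurd hc hc', hk,
    cim_succ]
  split_ifs <;> simp [hfixed] <;> ring

end LabelledInvolution

attribute [ext] Hook HookPerm

def specialHookInvolutionEquiv {l : ℕ} (μ : Fin l → ℕ) (hpos : ∀ i, 0 < μ i) :
    {I : HookPerm l // I.IsInvolution ∧ (∀ i, (I.hooks i).size = μ i) ∧ I.IsSpecial} ≃
      LabelledInvolution (univ : Finset (Fin l)) μ where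
  toFun I :=
    ⟨(I.1.perm, fun a => (I.1.hooks a).height), by
      obtain ⟨⟨hooks, σ⟩, ⟨hσ, hhooks⟩, hsize, hspecial⟩ := I
      refine ⟨fun a => by simpa using DFunLike.congr_fun hσ a, by simp, fun a => ?_,
        fun a => congrArg Hook.height (hhooks a), fun a _ => hsize a ▸ (hooks a).height_lt,
        fun a ha => (hspecial a ha).2, fun a _ ha => hsize a ▸ (hspecial a ha).1⟩
      rw [← hsize, ← hsize, hhooks]⟩
  invFun p :=
    ⟨⟨fun a => ⟨μ a, p.1.2 a, hpos a, p.2.label_lt a (mem_univ a)⟩, p.2.involutive.toPerm⟩,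
      ⟨Equiv.ext p.2.involutive, fun a => Hook.ext (p.2.bound_apply a) (p.2.label_apply a)⟩,
      fun _ => rfl, fun a ha => ⟨p.2.odd_of_fixed a (mem_univ a) ha, p.2.label_of_fixed a ha⟩⟩
  left_inv I := by
    ext a
    · exact (I.2.2.1 a).symm
    · rfl
    · rfl
  right_inv _ := rfl

theorem stmt12_general (l : ℕ) (μ : Fin l → ℕ) (hpos : ∀ i, 0 < μ i) :
    Nat.card {I : HookPerm l // I.IsInvolution ∧
        (∀ i, (I.hooks i).size = μ i) ∧ I.IsSpecial} =
      ∏ i ∈ Finset.Icc 1 (∑ j, μ j),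
        cim i (Finset.univ.filter (fun j => μ j = i)).card := by
  rw [Nat.card_congr (specialHookInvolutionEquiv μ hpos)]
  exact card_labelledInvolution fun a _ =>
    mem_Icc.2 ⟨hpos a, single_le_sum (fun j _ => Nat.zero_le (μ j)) (mem_univ a)⟩

/-- For a partition `μ` with `mᵢ` parts equal to `i`, the number of special
hook involutions of content `μ` is `∏ᵢ c_{i,mᵢ}`. -/
theorem stmt12 (l : ℕ) (μ : Fin l → ℕ) (hpos : ∀ i, 0 < μ i) (hmono : Antitone μ) :
    Nat.card {I : HookPerm l // I.IsInvolution ∧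
        (∀ i, (I.hooks i).size = μ i) ∧ I.IsSpecial} =
      ∏ i ∈ Finset.Icc 1 (∑ j, μ j),
        cim i (Finset.univ.filter (fun j => μ j = i)).card :=
  stmt12_general l μ hpos
end

section
/- Let c₁ and c₂ be two disjoint cycles of length m in the symmetric group S_n (their supports are disjoint). Then there exist exactly m permutations c in S_n that are cycles of length 2m and satisfy c² = c₁·c₂. -/
/-!
Fix `x` in the support of `c₁`. A `2m`-cycle `c` with `c² = c₁ c₂` has support exactly
`supp c₁ ∪ supp c₂`; since its order `2m` is even, `c x` never lies in the `c²`-orbit of `x`, so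
`c x ∈ supp c₂`. Moreover `c` is determined by `c²` and `c x`, as these determine all `cᵏ x`, so
`c ↦ c x` injects the square roots into `supp c₂`. Conversely, if `g` conjugates `c₁` to `c₂` and
`τ` acts as `g` on `supp c₁` and as `g⁻¹` on `supp c₂`, then `τ c₂ τ = c₁`, so `τ c₂` is a square
root; conjugating it by the powers of `c₂`, which centralize `c₁ c₂`, sends `x` to every point of
`supp c₂`.
-/

open Equiv Equiv.Perm Finset

namespace Equiv.Perm

variable {α : Type*} {f g c c' c₁ c₂ : Perm α} {x y : α}

theorem SameCycle.mul_of_commute (h : f.SameCycle x y) (hfg : Commute f g) (hx : g x = x) :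
    (f * g).SameCycle x y := by
  obtain ⟨i, rfl⟩ := h
  exact ⟨i, by rw [hfg.mul_zpow, mul_apply, zpow_apply_eq_self_of_apply_eq_self hx]⟩

theorem SameCycle.of_mul_self (h : (f * f).SameCycle x y) : f.SameCycle x y :=
  SameCycle.of_pow (n := 2) (by rwa [sq])

theorem pow_apply_eq_of_mul_self_eq (hsq : c * c = c' * c') (hx : c x = c' x) :
    ∀ k : ℕ, (c ^ k) x = (c' ^ k) x
  | 0 => rfl
  | 1 => by simpa using hx
  | k + 2 => by
    rw [add_comm, pow_add, pow_add, sq, sq, hsq, mul_apply, mul_apply (c' * c'),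
      pow_apply_eq_of_mul_self_eq hsq hx k]

section Finite

variable [DecidableEq α]

theorem exists_perm_eqOn_eqOn_symm {s t : Finset α} (hst : _root_.Disjoint s t) (g : Perm α)
    (hg : ∀ z, z ∈ s ↔ g z ∈ t) :
    ∃ τ : Perm α, (∀ z ∈ s, τ z = g z) ∧ (∀ z ∈ t, τ z = g.symm z) ∧
      ∀ z ∉ s ∪ t, τ z = z := by
  let f z := if z ∈ s then g z else if z ∈ t then g.symm z else z
  have hf : Function.Involutive f := by
    intro z
    by_cases hs : z ∈ s
    · have ht := (hg z).mp hs
      simp [f, hs, ht, disjoint_right.mp hst ht]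
    by_cases ht : z ∈ t
    · have : g.symm z ∈ s := (hg _).mpr (by simpa)
      simp only [f, if_neg hs, if_pos ht, if_pos this, apply_symm_apply]
    · simp [f, hs, ht]
  refine ⟨hf.toPerm, fun z hz => if_pos hz, fun z hz => ?_, fun z hz => ?_⟩
  · simp [f, hz, disjoint_right.mp hst hz]
  · simp_all [f]

variable [Fintype α]

theorem support_union_subset_of_mul_self_eq (hd : c₁.Disjoint c₂) (hsq : c * c = c₁ * c₂) :
    c₁.support ∪ c₂.support ⊆ c.support := by
  rw [← hd.support_mul, ← hsq, ← sq]
  exact support_pow_le c 2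

theorem support_eq_union_of_mul_self_eq (hd : c₁.Disjoint c₂) (hsq : c * c = c₁ * c₂)
    (hcard : #c.support ≤ #c₁.support + #c₂.support) :
    c.support = c₁.support ∪ c₂.support := by
  refine (eq_of_subset_of_card_le (support_union_subset_of_mul_self_eq hd hsq) ?_).symm
  rwa [card_union_of_disjoint (disjoint_iff_disjoint_support.mp hd)]

theorem IsCycle.not_sameCycle_mul_self_apply (hc : c.IsCycle) (he : Even #c.support)
    (hx : c x ≠ x) : ¬(c * c).SameCycle x (c x) := by
  intro h
  obtain ⟨i, hi, -, hix⟩ := h.exists_pow_eq''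
  have hfix : (c ^ (2 * i - 1)) x = x := by
    apply c.injective
    rw [← mul_apply, ← pow_succ', Nat.sub_add_cancel (by omega), pow_mul, sq, hix]
  have hdvd := orderOf_dvd_of_pow_eq_one ((hc.pow_eq_one_iff' hx).mpr hfix)
  rw [hc.orderOf] at hdvd
  have := (even_iff_two_dvd.mp he).trans hdvd
  omega

theorem IsCycle.eq_of_mul_self_eq (hc : c.IsCycle) (hc' : c'.IsCycle)
    (hsq : c * c = c' * c') (hx : x ∈ c.support) (hxx : c x = c' x) : c = c' := by
  refine hc.eq_on_support_inter_nonempty_congr hc' (fun z hz => ?_) hxx hx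
  obtain ⟨k, rfl⟩ :=
    hc.exists_pow_eq (mem_support.mp hx) (mem_support.mp (mem_of_mem_inter_left hz))
  calc c ((c ^ k) x) = (c ^ (k + 1)) x := by rw [pow_succ', mul_apply]
    _ = (c' ^ (k + 1)) x := pow_apply_eq_of_mul_self_eq hsq hxx _
    _ = c' ((c ^ k) x) := by rw [pow_succ', mul_apply, pow_apply_eq_of_mul_self_eq hsq hxx]

theorem apply_mem_support_of_mul_self_eq (h₁ : c₁.IsCycle) (hd : c₁.Disjoint c₂)
    (hc : c.IsCycle) (he : Even #c.support) (hsupp : c.support = c₁.support ∪ c₂.support)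
    (hsq : c * c = c₁ * c₂) (hx : x ∈ c₁.support) : c x ∈ c₂.support := by
  have hxc : x ∈ c.support := hsupp ▸ mem_union_left _ hx
  have hcx : c x ∈ c₁.support ∪ c₂.support := hsupp ▸ apply_mem_support.mpr hxc
  refine (mem_union.mp hcx).resolve_left fun hcx₁ => ?_
  refine hc.not_sameCycle_mul_self_apply he (mem_support.mp hxc) (hsq ▸ ?_)
  exact (h₁.sameCycle (mem_support.mp hx) (mem_support.mp hcx₁)).mul_of_commute hd.commute
    (notMem_support.mp (disjoint_left.mp (disjoint_iff_disjoint_support.mp hd) hx))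

theorem exists_isCycle_mul_self_eq (h₁ : c₁.IsCycle) (h₂ : c₂.IsCycle) (hd : c₁.Disjoint c₂)
    (hcard : #c₁.support = #c₂.support) :
    ∃ c : Perm α, c.IsCycle ∧ c.support = c₁.support ∪ c₂.support ∧ c * c = c₁ * c₂ := by
  have hdisj := disjoint_iff_disjoint_support.mp hd
  obtain ⟨g, hg⟩ := isConj_iff.mp (h₁.isConj h₂ hcard)
  have hgs : ∀ z, z ∈ c₁.support ↔ g z ∈ c₂.support := by
    intro z; rw [← hg, support_conj]; simp
  obtain ⟨τ, hτ₁, hτ₂, hτ₀⟩ := exists_perm_eqOn_eqOn_symm hdisj g hgs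
  have hconj : τ * c₂ * τ = c₁ := by
    ext z
    simp only [mul_apply]
    by_cases h1 : z ∈ c₁.support
    · have hgc : c₂ (g z) = g (c₁ z) := by rw [← hg]; simp
      rw [hτ₁ z h1, hgc, hτ₂ _ ((hgs _).mp (apply_mem_support.mpr h1)), symm_apply_apply]
    by_cases h2 : z ∈ c₂.support
    · have hgz : g.symm z ∈ c₁.support := (hgs _).mpr (by rwa [apply_symm_apply])
      rw [hτ₂ z h2, notMem_support.mp (disjoint_left.mp hdisj hgz), hτ₁ _ hgz, apply_symm_apply,
        notMem_support.mp (disjoint_right.mp hdisj h2)]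
    · have h : z ∉ c₁.support ∪ c₂.support := by simp [h1, h2]
      rw [hτ₀ z h, notMem_support.mp h2, hτ₀ z h, notMem_support.mp h1]
  have hsq : τ * c₂ * (τ * c₂) = c₁ * c₂ := by rw [← hconj]; simp only [mul_assoc]
  set c := τ * c₂
  obtain ⟨x, hx⟩ := h₁.nonempty_support
  have hc₂x : c₂ x = x := notMem_support.mp (disjoint_left.mp hdisj hx)
  have hcx : c x ∈ c₂.support := by
    rw [mul_apply, hc₂x, hτ₁ x hx]; exact (hgs x).mp hx
  have hc₁cx : c₁ (c x) = c x := notMem_support.mp (disjoint_right.mp hdisj hcx)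
  have hsub : c.support ⊆ c₁.support ∪ c₂.support := by
    intro z hz
    by_contra hz'
    have hc₂z : c₂ z = z := notMem_support.mp fun h => hz' (mem_union_right _ h)
    exact mem_support.mp hz (by rw [mul_apply, hc₂z, hτ₀ z hz'])
  have hsupp := hsub.antisymm (support_union_subset_of_mul_self_eq hd hsq)
  refine ⟨c, ⟨x, mem_support.mp (hsupp ▸ mem_union_left _ hx), fun z hz => ?_⟩, hsupp, hsq⟩
  rcases mem_union.mp (hsub (mem_support.mpr hz)) with hz | hz
  · refine SameCycle.of_mul_self (hsq ▸ ?_)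
    exact (h₁.sameCycle (mem_support.mp hx) (mem_support.mp hz)).mul_of_commute hd.commute hc₂x
  · refine (SameCycle.of_mul_self (hsq ▸ hd.commute.eq ▸ ?_)).of_apply_left
    exact (h₂.sameCycle (mem_support.mp hcx) (mem_support.mp hz)).mul_of_commute
      hd.symm.commute hc₁cx

theorem exists_isCycle_mul_self_eq_apply_eq (h₁ : c₁.IsCycle) (h₂ : c₂.IsCycle)
    (hd : c₁.Disjoint c₂) (hcard : #c₁.support = #c₂.support) (hx : x ∈ c₁.support)
    (hy : y ∈ c₂.support) :
    ∃ c : Perm α, c.IsCycle ∧ c.support = c₁.support ∪ c₂.support ∧ c * c = c₁ * c₂ ∧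
      c x = y := by
  obtain ⟨c, hc, hsupp, hsq⟩ := exists_isCycle_mul_self_eq h₁ h₂ hd hcard
  have he : Even #c.support := by
    rw [hsupp, card_union_of_disjoint (disjoint_iff_disjoint_support.mp hd), hcard]
    exact Even.add_self _
  have hcx := apply_mem_support_of_mul_self_eq h₁ hd hc he hsupp hsq hx
  obtain ⟨k, hk⟩ := h₂.exists_pow_eq (mem_support.mp hcx) (mem_support.mp hy)
  have hcomm : Commute (c₂ ^ k) (c₁ * c₂) :=
    (hd.commute.symm.mul_right (Commute.refl c₂)).pow_left k
  have hsq' : c₂ ^ k * c * (c₂ ^ k)⁻¹ * (c₂ ^ k * c * (c₂ ^ k)⁻¹) = c₁ * c₂ := by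
    rw [conj_mul, hsq, hcomm.mul_inv_cancel]
  refine ⟨_, hc.conj, support_eq_union_of_mul_self_eq hd hsq' ?_, hsq', ?_⟩
  · rw [card_support_conj, hsupp, card_union_of_disjoint (disjoint_iff_disjoint_support.mp hd)]
  · have hc₂x : c₂ x = x :=
      notMem_support.mp (disjoint_left.mp (disjoint_iff_disjoint_support.mp hd) hx)
    have hx' : (c₂ ^ k)⁻¹ x = x := by
      rw [inv_eq_iff_eq, pow_apply_eq_self_of_apply_eq_self hc₂x]
    rw [mul_apply, mul_apply, hx', hk]

end Finite

end Equiv.Perm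

/-- If `c₁`, `c₂` are disjoint cycles of length `m` in `Sₙ`, there are exactly
`m` cycles `c` of length `2m` with `c² = c₁·c₂`. -/
theorem stmt15 (n m : ℕ) (c₁ c₂ : Equiv.Perm (Fin n))
    (h₁ : c₁.IsCycle) (h₂ : c₂.IsCycle)
    (hs₁ : c₁.support.card = m) (hs₂ : c₂.support.card = m)
    (hdisj : Disjoint c₁.support c₂.support) :
    Nat.card {c : Equiv.Perm (Fin n) //
        c.IsCycle ∧ c.support.card = 2 * m ∧ c * c = c₁ * c₂} = m := by
  have hd : c₁.Disjoint c₂ := disjoint_iff_disjoint_support.mpr hdisj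
  obtain ⟨x, hx⟩ := h₁.nonempty_support
  have hsupp : ∀ c : Perm (Fin n), #c.support = 2 * m → c * c = c₁ * c₂ →
      c.support = c₁.support ∪ c₂.support := fun c hcard hsq =>
    support_eq_union_of_mul_self_eq hd hsq (by omega)
  let f : {c : Perm (Fin n) // c.IsCycle ∧ #c.support = 2 * m ∧ c * c = c₁ * c₂} → c₂.support :=
    fun c => ⟨c.1 x, apply_mem_support_of_mul_self_eq h₁ hd c.2.1 ⟨m, by omega⟩
      (hsupp c.1 c.2.2.1 c.2.2.2) c.2.2.2 hx⟩
  have hf : Function.Bijective f := by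
    refine ⟨fun ⟨c, hc, hcard, hsq⟩ ⟨c', hc', _, hsq'⟩ hcc' => Subtype.ext ?_,
      fun ⟨y, hy⟩ => ?_⟩
    · refine hc.eq_of_mul_self_eq hc' (hsq.trans hsq'.symm) ?_ (congrArg Subtype.val hcc')
      exact hsupp c hcard hsq ▸ mem_union_left _ hx
    · obtain ⟨c, hc, hcsupp, hsq, hcx⟩ :=
        exists_isCycle_mul_self_eq_apply_eq h₁ h₂ hd (hs₁.trans hs₂.symm) hx hy
      refine ⟨⟨c, hc, ?_, hsq⟩, Subtype.ext hcx⟩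
      rw [hcsupp, card_union_of_disjoint hdisj, hs₁, hs₂, two_mul]
  rw [Nat.card_eq_of_bijective f hf, Nat.card_eq_fintype_card, Fintype.card_coe, hs₂]
end

section
/- Let m be an odd positive integer and let c₁ be a cycle of length m in the symmetric group S_n. Then there exists exactly one cycle c of length m in S_n such that c² = c₁. -/
/-! For odd `m = 2t + 1`, squaring is a bijection on the cyclic group `⟨c⟩` generated by any `c` with
`c ^ m = 1`, with inverse `x ↦ x ^ (t + 1)`. So a square root `c` of `c₁` that is an `m`-cycle has
order `m` and must equal `c₁ ^ (t + 1)`; conversely `c₁ ^ (t + 1)` is an `m`-cycle with the same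
support as `c₁`, because `t + 1` is coprime to the order `m` of `c₁`. -/

open Equiv Finset

theorem Nat.coprime_succ_two_mul_add_one (t : ℕ) : (t + 1).Coprime (2 * t + 1) := by
  rw [show 2 * t + 1 = (t + 1) + t by ring, Nat.coprime_self_add_right]
  simp

theorem eq_mul_self_pow_succ_of_pow_eq_one {M : Type*} [Monoid M] {c : M} {t : ℕ}
    (hc : c ^ (2 * t + 1) = 1) : c = (c * c) ^ (t + 1) := by
  rw [← sq, ← pow_mul, show 2 * (t + 1) = (2 * t + 1) + 1 by ring, pow_succ, hc, one_mul]

namespace Equiv.Perm.IsCycle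

variable {α : Type*} [DecidableEq α] [Fintype α] {σ : Perm α} {t : ℕ}

theorem pow_card_support_eq_one (hσ : σ.IsCycle) : σ ^ #σ.support = 1 := by
  rw [← hσ.orderOf]
  exact pow_orderOf_eq_one σ

theorem isCycle_pow_succ (hσ : σ.IsCycle) (hs : #σ.support = 2 * t + 1) :
    (σ ^ (t + 1)).IsCycle :=
  hσ.pow_iff.mpr (hσ.orderOf ▸ hs ▸ Nat.coprime_succ_two_mul_add_one t)

theorem support_pow_succ (hσ : σ.IsCycle) (hs : #σ.support = 2 * t + 1) :
    (σ ^ (t + 1)).support = σ.support :=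
  support_pow_coprime (hσ.orderOf ▸ hs ▸ Nat.coprime_succ_two_mul_add_one t)

theorem pow_succ_mul_self (hσ : σ.IsCycle) (hs : #σ.support = 2 * t + 1) :
    σ ^ (t + 1) * σ ^ (t + 1) = σ := by
  rw [← pow_add, ← two_mul, show 2 * (t + 1) = (2 * t + 1) + 1 by ring, pow_succ,
    ← hs, hσ.pow_card_support_eq_one, one_mul]

theorem eq_pow_succ_of_mul_self_eq {c : Perm α} (hc : c.IsCycle) (hs : #c.support = 2 * t + 1)
    {σ : Perm α} (h : c * c = σ) : c = σ ^ (t + 1) :=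
  h ▸ eq_mul_self_pow_succ_of_pow_eq_one (hs ▸ hc.pow_card_support_eq_one)

end Equiv.Perm.IsCycle

theorem stmt16_general (n m : ℕ) (hm : Odd m)
    (c₁ : Equiv.Perm (Fin n)) (h₁ : c₁.IsCycle) (hs₁ : c₁.support.card = m) :
    Nat.card {c : Equiv.Perm (Fin n) //
        c.IsCycle ∧ c.support.card = m ∧ c * c = c₁} = 1 := by
  obtain ⟨t, rfl⟩ := hm
  rw [Nat.card_eq_one_iff_exists]
  refine ⟨⟨c₁ ^ (t + 1), h₁.isCycle_pow_succ hs₁, ?_, h₁.pow_succ_mul_self hs₁⟩, ?_⟩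
  · rw [h₁.support_pow_succ hs₁, hs₁]
  · rintro ⟨c, hc, hcs, hsq⟩
    exact Subtype.ext (hc.eq_pow_succ_of_mul_self_eq hcs hsq)

/-- If `m` is odd and `c₁` is a cycle of length `m` in `Sₙ`, there is a unique
cycle `c` of length `m` with `c² = c₁`. -/
theorem stmt16 (n m : ℕ) (hm : Odd m) (hmpos : 0 < m)
    (c₁ : Equiv.Perm (Fin n)) (h₁ : c₁.IsCycle) (hs₁ : c₁.support.card = m) :
    Nat.card {c : Equiv.Perm (Fin n) //
        c.IsCycle ∧ c.support.card = m ∧ c * c = c₁} = 1 :=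
  stmt16_general n m hm c₁ h₁ hs₁
end
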